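/- arXiv:1411.4444 — 5 statements merged into one kernel-verified Lean document; each statement's English description precedes it below -/
import Mathlib

section
/- Let g be an alternating L-convex function on T^n and let x ∈ dom g. If x is not a global minimizer of g over T^n, then there exists x' ∈ I(x) ∪ F(x) with g(x') < g(x). -/
open SimpleGraph

/-- A tree `T` regarded as a bipartite graph with black class `B` and white class `W`,
together with the discrete midpoint operations `bull` (`•`) and `circ` (`∘`) characterized
by: `{u • v, u ∘ v} = {a, b}` where `(a,b)` is the unique pair with
`d(u,v) = d(u,a) + d(a,b) + d(b,v)`, `d(u,a) = d(b,v)`, `d(a,b) ≤ 1`, and `u ∘ v ⪯ u • v`. -/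
structure AltTree (V : Type*) where
  T : SimpleGraph V
  tree : T.IsTree
  B : Set V
  W : Set V
  color_disjoint : Disjoint B W
  color_cover : B ∪ W = Set.univ
  adj_colors : ∀ ⦃u v : V⦄, T.Adj u v → (u ∈ B ∧ v ∈ W) ∨ (u ∈ W ∧ v ∈ B)
  bull : V → V → V
  circ : V → V → V
  mid_spec : ∀ u v : V,
      (T.dist u v = T.dist u (bull u v) + T.dist (bull u v) (circ u v) + T.dist (circ u v) v
        ∧ T.dist u (bull u v) = T.dist (circ u v) v)
    ∨ (T.dist u v = T.dist u (circ u v) + T.dist (circ u v) (bull u v) + T.dist (bull u v) v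
        ∧ T.dist u (circ u v) = T.dist (bull u v) v)
  mid_close : ∀ u v : V, T.dist (bull u v) (circ u v) ≤ 1
  circ_le_bull : ∀ u v : V, circ u v = bull u v ∨
      (T.Adj (circ u v) (bull u v) ∧ circ u v ∈ W ∧ bull u v ∈ B)

namespace AltTree

variable {V : Type*} {n : ℕ}

/-- The alternating partial order `u ⪯ v` on the vertices of `T`:
`u ⪯ v` iff `u = v` or `u` and `v` are adjacent with `u` white and `v` black. -/
def le (A : AltTree V) (u v : V) : Prop :=
  u = v ∨ (A.T.Adj u v ∧ u ∈ A.W ∧ v ∈ A.B)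

/-- The componentwise partial order on `T^n`.  `A.leP y x` means `y ∈ I(x)`,
and `A.leP x y` means `y ∈ F(x)`. -/
def leP (A : AltTree V) (x y : Fin n → V) : Prop := ∀ i, A.le (x i) (y i)

/-- The `l∞`-metric on `T^n`. -/
noncomputable def distP (A : AltTree V) (x y : Fin n → V) : ℕ :=
  Finset.univ.sup fun i => A.T.dist (x i) (y i)

/-- Componentwise `•` on `T^n`. -/
def bullP (A : AltTree V) (x y : Fin n → V) : Fin n → V := fun i => A.bull (x i) (y i)

/-- Componentwise `∘` on `T^n`. -/
def circP (A : AltTree V) (x y : Fin n → V) : Fin n → V := fun i => A.circ (x i) (y i)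

/-- Alternating L-convexity: `g(x) + g(y) ≥ g(x • y) + g(x ∘ y)` for all `x, y ∈ T^n`. -/
def IsLConvex (A : AltTree V) (g : (Fin n → V) → WithTop ℝ) : Prop :=
  ∀ x y : Fin n → V, g (A.bullP x y) + g (A.circP x y) ≤ g x + g y

end AltTree


section Aux
namespace AltTree

variable {V : Type*}

lemma dist_mid (A : AltTree V) (u v : V) :
    2 * A.T.dist u (A.bull u v) ≤ A.T.dist u v + 1 ∧
    2 * A.T.dist u (A.circ u v) ≤ A.T.dist u v + 1 := by
  have hconn := A.tree.isConnected
  have htri : A.T.dist u (A.circ u v) ≤ A.T.dist u (A.bull u v) + A.T.dist (A.bull u v) (A.circ u v) :=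
    hconn.dist_triangle
  have htri' : A.T.dist u (A.bull u v) ≤ A.T.dist u (A.circ u v) + A.T.dist (A.circ u v) (A.bull u v) :=
    hconn.dist_triangle
  have hclose := A.mid_close u v
  have hcomm : A.T.dist (A.circ u v) (A.bull u v) = A.T.dist (A.bull u v) (A.circ u v) :=
    SimpleGraph.dist_comm
  rcases A.mid_spec u v with ⟨h1, h2⟩ | ⟨h1, h2⟩ <;> omega

lemma le_small (A : AltTree V) (u v : V) (h : A.T.dist u v ≤ 1) :
    A.le u (A.bull u v) ∧ A.le (A.circ u v) u := by
  have hconn := A.tree.isConnected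
  have hclose := A.mid_close u v
  interval_cases hd : A.T.dist u v
  · -- dist = 0 : u = v, and bull = circ = u
    have huv : u = v := hconn.dist_eq_zero_iff.mp hd
    rcases A.mid_spec u v with ⟨h1, h2⟩ | ⟨h1, h2⟩
    · have hb : A.T.dist u (A.bull u v) = 0 := by omega
      have hc : A.T.dist (A.circ u v) v = 0 := by omega
      have hb' : u = A.bull u v := hconn.dist_eq_zero_iff.mp hb
      have hc' : A.circ u v = v := hconn.dist_eq_zero_iff.mp hc
      exact ⟨Or.inl hb', Or.inl (hc'.trans huv.symm)⟩
    · have hb : A.T.dist (A.bull u v) v = 0 := by omega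
      have hc : A.T.dist u (A.circ u v) = 0 := by omega
      have hb' : A.bull u v = v := hconn.dist_eq_zero_iff.mp hb
      have hc' : u = A.circ u v := hconn.dist_eq_zero_iff.mp hc
      exact ⟨Or.inl (huv.trans hb'.symm), Or.inl hc'.symm⟩
  · -- dist = 1
    rcases A.mid_spec u v with ⟨h1, h2⟩ | ⟨h1, h2⟩
    · have hb : A.T.dist u (A.bull u v) = 0 := by omega
      have hc : A.T.dist (A.circ u v) v = 0 := by omega
      have he : A.T.dist (A.bull u v) (A.circ u v) = 1 := by omega
      have hb' : u = A.bull u v := hconn.dist_eq_zero_iff.mp hb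
      have hc' : A.circ u v = v := hconn.dist_eq_zero_iff.mp hc
      rcases A.circ_le_bull u v with heq | ⟨hadj, hW, hB⟩
      · rw [heq] at he
        simp [SimpleGraph.dist_self] at he
      · refine ⟨Or.inl hb', Or.inr ⟨?_, hW, ?_⟩⟩
        · simpa only [← hb'] using hadj
        · simpa only [← hb'] using hB
    · have hb : A.T.dist (A.bull u v) v = 0 := by omega
      have hc : A.T.dist u (A.circ u v) = 0 := by omega
      have hc' : u = A.circ u v := hconn.dist_eq_zero_iff.mp hc
      rcases A.circ_le_bull u v with heq | ⟨hadj, hW, hB⟩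
      · exact ⟨Or.inl (hc'.trans heq), Or.inl hc'.symm⟩
      · refine ⟨Or.inr ⟨?_, ?_, hB⟩, Or.inl hc'.symm⟩
        · simpa only [← hc'] using hadj
        · simpa only [← hc'] using hW

end AltTree
end Aux

/-- L-optimality criterion, Theorem 2.4.  Let `g` be an alternating
L-convex function on `T^n` and `x ∈ dom g`.  If `x` is not a global minimizer of `g`
over `T^n`, then there exists `x' ∈ I(x) ∪ F(x)` with `g(x') < g(x)`. -/
theorem stmt0 {V : Type*} (A : AltTree V) {n : ℕ}
    (g : (Fin n → V) → WithTop ℝ) (hg : A.IsLConvex g)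
    (x : Fin n → V) (hdom : g x ≠ ⊤)
    (hnotmin : ¬ ∀ y : Fin n → V, g x ≤ g y) :
    ∃ x' : Fin n → V, (A.leP x' x ∨ A.leP x x') ∧ g x' < g x := by
  classical
  push_neg at hnotmin
  obtain ⟨y0, hy0⟩ := hnotmin
  have hex : ∃ r : ℕ, ∃ y, g y < g x ∧ A.distP x y = r :=
    ⟨A.distP x y0, y0, hy0, rfl⟩
  obtain ⟨y, hy, hyr⟩ := Nat.find_spec hex
  set r := Nat.find hex with hrdef
  have key : ∀ y' : Fin n → V, g y' < g x →
      g (A.bullP x y') < g x ∨ g (A.circP x y') < g x := by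
    intro y' hy'
    by_contra hc
    push_neg at hc
    have h1 := hg x y'
    have h2 : g x + g x ≤ g (A.bullP x y') + g (A.circP x y') := add_le_add hc.1 hc.2
    have h3 : g x + g y' < g x + g x := WithTop.add_lt_add_left hdom hy'
    exact absurd h3 (not_lt.mpr (le_trans h2 h1))
  have hcomp : ∀ i, A.T.dist (x i) (y i) ≤ r := by
    intro i
    rw [← hyr]
    simp only [AltTree.distP]
    exact Finset.le_sup (f := fun i => A.T.dist (x i) (y i)) (Finset.mem_univ i)
  have hr1 : r ≤ 1 := by
    by_contra hbig
    push_neg at hbig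
    have hb : A.distP x (A.bullP x y) ≤ r - 1 := by
      apply Finset.sup_le
      intro i _
      show A.T.dist (x i) (A.bull (x i) (y i)) ≤ r - 1
      have := (A.dist_mid (x i) (y i)).1
      have := hcomp i
      omega
    have hc : A.distP x (A.circP x y) ≤ r - 1 := by
      apply Finset.sup_le
      intro i _
      show A.T.dist (x i) (A.circ (x i) (y i)) ≤ r - 1
      have := (A.dist_mid (x i) (y i)).2
      have := hcomp i
      omega
    rcases key y hy with h | h
    · have := Nat.find_min' hex ⟨A.bullP x y, h, rfl⟩
      omega
    · have := Nat.find_min' hex ⟨A.circP x y, h, rfl⟩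
      omega
  have hsmall : ∀ i, A.T.dist (x i) (y i) ≤ 1 := fun i => le_trans (hcomp i) hr1
  rcases key y hy with h | h
  · exact ⟨A.bullP x y, Or.inr fun i => (A.le_small _ _ (hsmall i)).1, h⟩
  · exact ⟨A.circP x y, Or.inl fun i => (A.le_small _ _ (hsmall i)).2, h⟩
end

section
/- Let h : ℤ → ℝ be a nondecreasing, convex, even function, and let z,w be vertices of T belonging to the same color class. Then h_{T;z,w}(u,v) := h(d(u,z) + d(v,w)) is alternating L-convex on T×T. Moreover, for every (u,v) ∈ T×T with D := d(u,z) + d(v,w), letting a be the vertex of F(u) nearest to z and b the vertex of F(v) nearest to w, for all (s,t) ∈ F(u)×F(v): h_{T;z,w}(s,t) − h(D) equals Δh(D)·θ_a(s) if u ∈ W and v ∈ B; Δh(D)·θ_b(t) if u ∈ B and v ∈ W; Δh(D)·(θ_a(s)+θ_b(t)) + Δ²h(D)·μ_{a,b}(s,t) if u,v ∈ W; and 0 if u,v ∈ B. -/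
open SimpleGraph

open Classical in
/-- The basic one-dimensional function `θ_a` on `F(u)` (with minimal element `u`):
`θ_a(s) = −1` if `s = a ≠ u`, `0` if `s = u`, and `1` otherwise. -/
noncomputable def theta {V : Type*} (u a s : V) : ℝ :=
  if s = a ∧ a ≠ u then -1 else if s = u then 0 else 1

open Classical in
/-- The basic binary function `μ_{a,b}` on `F(u) × F(v)` (with minimal elements `u, v`):
`μ_{a,b}(s,t) = 0` if `s = a ≠ u` or `t = b ≠ v` or `(s,t) = (u,v)`;
`1` if (`t = v` and `u ≠ s ≠ a`) or (`s = u` and `v ≠ t ≠ b`); and `2` otherwise. -/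
noncomputable def mu {V : Type*} (u v a b s t : V) : ℝ :=
  if (s = a ∧ a ≠ u) ∨ (t = b ∧ b ≠ v) ∨ (s = u ∧ t = v) then 0
  else if (t = v ∧ u ≠ s ∧ s ≠ a) ∨ (s = u ∧ v ≠ t ∧ t ≠ b) then 1
  else 2

/-- Membership in the principal filter `F(u)` of `T`:
`F(u) = {u} ∪ {neighbors of u}` if `u ∈ W`, and `F(u) = {u}` if `u ∈ B`. -/
def memF {V : Type*} (A : AltTree V) (u s : V) : Prop :=
  s = u ∨ (u ∈ A.W ∧ A.T.Adj u s)

/-- The difference `Δh(t) := h(t) − h(t−1)`. -/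
def dh (h : ℤ → ℝ) (t : ℤ) : ℝ := h t - h (t - 1)

/-- The second difference `Δ²h(t) := h(t+1) − 2h(t) + h(t−1)`. -/
def d2h (h : ℤ → ℝ) (t : ℤ) : ℝ := h (t + 1) - 2 * h t + h (t - 1)

/-- Alternating L-convexity for a (real-valued) function on `T × T`, with the
discrete midpoint operations applied componentwise. -/
def IsLConvex2 {V : Type*} (A : AltTree V) (g : V → V → ℝ) : Prop :=
  ∀ u₁ u₂ v₁ v₂ : V,
    g (A.bull u₁ v₁) (A.bull u₂ v₂) + g (A.circ u₁ v₁) (A.circ u₂ v₂) ≤ g u₁ u₂ + g v₁ v₂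


section TreeAux
open SimpleGraph Walk
variable {V : Type*} (A : AltTree V)

lemma AltTree.conn : A.T.Connected := A.tree.isConnected

lemma AltTree.memW_iff {x : V} : x ∈ A.W ↔ x ∉ A.B := by
  constructor
  · intro hx hb
    exact Set.disjoint_left.mp A.color_disjoint hb hx
  · intro hb
    have hx : x ∈ A.B ∪ A.W := by rw [A.color_cover]; trivial
    rcases (Set.mem_union _ _ _).mp hx with hc | hc
    · exact absurd hc hb
    · exact hc

lemma AltTree.adj_B_iff {x y : V} (hxy : A.T.Adj x y) : x ∈ A.B ↔ y ∉ A.B := by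
  rcases A.adj_colors hxy with ⟨hx, hy⟩ | ⟨hx, hy⟩
  · have := A.memW_iff.mp hy; tauto
  · have := A.memW_iff.mp hx; tauto

lemma AltTree.walk_even {x y : V} (p : A.T.Walk x y) :
    Even p.length ↔ (x ∈ A.B ↔ y ∈ A.B) := by
  induction p with
  | nil => simp
  | cons hadj q ih =>
    rw [Walk.length_cons, Nat.even_add_one, ih]
    have := A.adj_B_iff hadj
    tauto

lemma AltTree.dist_even_iff (x y : V) :
    Even (A.T.dist x y) ↔ (x ∈ A.B ↔ y ∈ A.B) := by
  obtain ⟨p, hp⟩ := (A.conn).exists_walk_length_eq_dist x y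
  rw [← hp]
  exact A.walk_even p

lemma AltTree.dist_le_of_mem_support {z y x : V} (p : A.T.Walk z y) (hx : x ∈ p.support) :
    A.T.dist z x ≤ p.length := by
  classical
  exact le_trans (SimpleGraph.dist_le (p.takeUntil x hx)) (p.length_takeUntil_le hx)

lemma AltTree.unique_closer {z u s s' : V} (hs : A.T.Adj u s) (hs' : A.T.Adj u s')
    (hds : A.T.dist z s + 1 = A.T.dist z u) (hds' : A.T.dist z s' + 1 = A.T.dist z u) :
    s = s' := by
  obtain ⟨p, hp⟩ := (A.conn).exists_walk_length_eq_dist z s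
  obtain ⟨q, hq⟩ := (A.conn).exists_walk_length_eq_dist z s'
  have hPlen : (p.concat hs.symm).length = A.T.dist z u := by
    rw [Walk.length_concat]; omega
  have hQlen : (q.concat hs'.symm).length = A.T.dist z u := by
    rw [Walk.length_concat]; omega
  have hPpath := (p.concat hs.symm).isPath_of_length_eq_dist hPlen
  have hQpath := (q.concat hs'.symm).isPath_of_length_eq_dist hQlen
  obtain ⟨r, -, hr⟩ := A.tree.existsUnique_path z u
  have heq : p.concat hs.symm = q.concat hs'.symm := by
    rw [hr _ hPpath, hr _ hQpath]
  have hedge : s(s, u) ∈ (q.concat hs'.symm).edges := by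
    rw [← heq, Walk.edges_concat, List.concat_eq_append]
    simp
  rw [Walk.edges_concat, List.concat_eq_append] at hedge
  rcases List.mem_append.mp hedge with hin | hlast
  · have hu : u ∈ q.support := q.snd_mem_support_of_mem_edges hin
    have := A.dist_le_of_mem_support q hu
    omega
  · simp only [List.mem_singleton] at hlast
    rw [Sym2.eq_iff] at hlast
    rcases hlast with ⟨h1, -⟩ | ⟨h1, h2⟩
    · exact h1
    · exact absurd h1.symm hs.ne

lemma AltTree.adj_dist {x y : V} (z : V) (hxy : A.T.Adj x y) :
    A.T.dist z y = A.T.dist z x + 1 ∨ A.T.dist z x = A.T.dist z y + 1 := by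
  have hxy1 : A.T.dist x y = 1 := SimpleGraph.dist_eq_one_iff_adj.mpr hxy
  have hyx1 : A.T.dist y x = 1 := by rwa [SimpleGraph.dist_comm] at hxy1
  have h1 : A.T.dist z y ≤ A.T.dist z x + A.T.dist x y := (A.conn).dist_triangle
  have h2 : A.T.dist z x ≤ A.T.dist z y + A.T.dist y x := (A.conn).dist_triangle
  have hpar : ¬ (A.T.dist z x = A.T.dist z y) := by
    intro he
    have e1 := A.dist_even_iff z x
    have e2 := A.dist_even_iff z y
    have e3 := A.adj_B_iff hxy
    rw [he] at e1
    tauto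
  omega

lemma AltTree.exists_pred {x v : V} (hd : A.T.dist x v ≠ 0) :
    ∃ y, A.T.Adj x y ∧ A.T.dist y v + 1 = A.T.dist x v := by
  obtain ⟨p, hp⟩ := (A.conn).exists_walk_length_eq_dist x v
  cases p with
  | nil => rw [← hp] at hd; simp at hd
  | @cons _ y _ hadj q =>
    refine ⟨y, hadj, ?_⟩
    rw [Walk.length_cons] at hp
    have h1 : A.T.dist y v ≤ q.length := SimpleGraph.dist_le q
    have hxy1 : A.T.dist x y = 1 := SimpleGraph.dist_eq_one_iff_adj.mpr hadj
    have h2 : A.T.dist x v ≤ A.T.dist x y + A.T.dist y v := (A.conn).dist_triangle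
    omega

lemma AltTree.incr_cont : ∀ n : ℕ, ∀ x x' v z : V, A.T.dist x' v = n →
    A.T.Adj x x' → A.T.dist x v = A.T.dist x' v + 1 → A.T.dist z x' = A.T.dist z x + 1 →
    A.T.dist z v = A.T.dist z x' + A.T.dist x' v := by
  intro n
  induction n with
  | zero =>
    intro x x' v z h0 _ _ _
    have : x' = v := ((A.conn).dist_eq_zero_iff).mp h0
    subst this
    simp [SimpleGraph.dist_self]
  | succ n ih =>
    intro x x' v z hn hadj hgeo hup
    obtain ⟨x'', hadj', hsucc⟩ := A.exists_pred (v := v) (x := x') (by omega)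
    have hxne : x ≠ x'' := by
      intro he; rw [← he] at hsucc; omega
    rcases A.adj_dist z hadj' with hinc | hdec
    · have := ih x' x'' v z (by omega) hadj' (by omega) hinc
      omega
    · have := A.unique_closer (z := z) hadj.symm hadj' (by omega) (by omega)
      exact absurd this hxne

lemma AltTree.gate : ∀ m : ℕ, ∀ u v x z : V, A.T.dist u x = m →
    A.T.dist u x + A.T.dist x v = A.T.dist u v →
    A.T.dist z x + A.T.dist u x = A.T.dist z u ∨
    A.T.dist z x + A.T.dist x v = A.T.dist z v := by
  intro m
  induction m with
  | zero =>
    intro u v x z h0 _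
    have : u = x := ((A.conn).dist_eq_zero_iff).mp h0
    subst this
    left; simp [SimpleGraph.dist_self]
  | succ m ih =>
    intro u v x z hm hgeo
    have hcomm : A.T.dist x u = A.T.dist u x := SimpleGraph.dist_comm
    have hd : A.T.dist x u ≠ 0 := by omega
    obtain ⟨y, hadj, hy⟩ := A.exists_pred hd
    have hcomm2 : A.T.dist y u = A.T.dist u y := SimpleGraph.dist_comm
    have hyu : A.T.dist u y = m := by omega
    have hyv_le : A.T.dist y v ≤ A.T.dist y x + A.T.dist x v := (A.conn).dist_triangle
    have hyv_ge : A.T.dist u v ≤ A.T.dist u y + A.T.dist y v := (A.conn).dist_triangle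
    have hyx1 : A.T.dist y x = 1 := SimpleGraph.dist_eq_one_iff_adj.mpr hadj.symm
    have hyv : A.T.dist y v = A.T.dist x v + 1 := by omega
    rcases ih u v y z hyu (by omega) with hL | hR
    · rcases A.adj_dist z hadj.symm with h1 | h2
      · -- dist z x = dist z y + 1 : increasing step y -> x
        right
        have := A.incr_cont (A.T.dist x v) y x v z rfl hadj.symm (by omega) (by omega)
        omega
      · left; omega
    · have hzv : A.T.dist z v ≤ A.T.dist z x + A.T.dist x v := (A.conn).dist_triangle
      have hzx : A.T.dist z x ≤ A.T.dist z y + A.T.dist y x := (A.conn).dist_triangle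
      right; omega

end TreeAux

section MidAux
variable {V : Type*} (A : AltTree V)

lemma AltTree.gate' {u v x z : V} (hx : A.T.dist u x + A.T.dist x v = A.T.dist u v) :
    A.T.dist z x + A.T.dist u x = A.T.dist z u ∨ A.T.dist z x + A.T.dist x v = A.T.dist z v :=
  A.gate (A.T.dist u x) u v x z rfl hx

lemma AltTree.mid_geo (u v : V) :
    A.T.dist u (A.bull u v) + A.T.dist (A.bull u v) v = A.T.dist u v ∧
    A.T.dist u (A.circ u v) + A.T.dist (A.circ u v) v = A.T.dist u v ∧
    A.T.dist u (A.bull u v) + A.T.dist u (A.circ u v) = A.T.dist u v ∧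
    A.T.dist (A.bull u v) v + A.T.dist (A.circ u v) v = A.T.dist u v := by
  rcases A.mid_spec u v with ⟨hk, hi⟩ | ⟨hk, hi⟩ <;>
  · set P := A.bull u v with hPdef
    set Q := A.circ u v with hQdef
    have t1 : A.T.dist P v ≤ A.T.dist P Q + A.T.dist Q v := (A.conn).dist_triangle
    have t2 : A.T.dist u v ≤ A.T.dist u P + A.T.dist P v := (A.conn).dist_triangle
    have t3 : A.T.dist u Q ≤ A.T.dist u P + A.T.dist P Q := (A.conn).dist_triangle
    have t4 : A.T.dist u v ≤ A.T.dist u Q + A.T.dist Q v := (A.conn).dist_triangle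
    have t5 : A.T.dist u P ≤ A.T.dist u Q + A.T.dist Q P := (A.conn).dist_triangle
    have t6 : A.T.dist Q v ≤ A.T.dist Q P + A.T.dist P v := (A.conn).dist_triangle
    have hc : A.T.dist Q P = A.T.dist P Q := SimpleGraph.dist_comm
    refine ⟨by omega, by omega, by omega, by omega⟩

lemma AltTree.mid_sum_le (u v z : V) :
    A.T.dist (A.bull u v) z + A.T.dist (A.circ u v) z ≤ A.T.dist u z + A.T.dist v z := by
  obtain ⟨hP, hQ, hE, hE'⟩ := A.mid_geo u v
  have gP := A.gate' (z := z) hP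
  have gQ := A.gate' (z := z) hQ
  have c1 : A.T.dist (A.bull u v) z = A.T.dist z (A.bull u v) := SimpleGraph.dist_comm
  have c2 : A.T.dist (A.circ u v) z = A.T.dist z (A.circ u v) := SimpleGraph.dist_comm
  have c3 : A.T.dist u z = A.T.dist z u := SimpleGraph.dist_comm
  have c4 : A.T.dist v z = A.T.dist z v := SimpleGraph.dist_comm
  have t1 : A.T.dist z u ≤ A.T.dist z v + A.T.dist v u := (A.conn).dist_triangle
  have t2 : A.T.dist z v ≤ A.T.dist z u + A.T.dist u v := (A.conn).dist_triangle
  have c5 : A.T.dist v u = A.T.dist u v := SimpleGraph.dist_comm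
  omega

lemma AltTree.mid_shape (u v z : V) :
    A.T.dist (A.bull u v) z ≤ A.T.dist (A.circ u v) z + 1 ∧
    A.T.dist (A.circ u v) z ≤ A.T.dist (A.bull u v) z + 1 := by
  have t1 : A.T.dist (A.bull u v) z ≤
      A.T.dist (A.bull u v) (A.circ u v) + A.T.dist (A.circ u v) z := (A.conn).dist_triangle
  have t2 : A.T.dist (A.circ u v) z ≤
      A.T.dist (A.circ u v) (A.bull u v) + A.T.dist (A.bull u v) z := (A.conn).dist_triangle
  have hc : A.T.dist (A.circ u v) (A.bull u v) = A.T.dist (A.bull u v) (A.circ u v) :=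
    SimpleGraph.dist_comm
  have := A.mid_close u v
  omega

lemma AltTree.mid_parity (u v z : V) :
    (A.T.dist (A.bull u v) z + A.T.dist (A.circ u v) z) % 2
      = (A.T.dist u z + A.T.dist v z) % 2 := by
  have hc : A.T.dist (A.circ u v) (A.bull u v) = A.T.dist (A.bull u v) (A.circ u v) :=
    SimpleGraph.dist_comm
  have hk2 : Even (A.T.dist (A.bull u v) (A.circ u v)) ↔ Even (A.T.dist u v) := by
    rcases A.mid_spec u v with ⟨hk, hi⟩ | ⟨hk, hi⟩ <;>
      (rw [Nat.even_iff, Nat.even_iff]; omega)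
  have e1 := A.dist_even_iff (A.bull u v) z
  have e2 := A.dist_even_iff (A.circ u v) z
  have e3 := A.dist_even_iff u z
  have e4 := A.dist_even_iff v z
  have e5 := A.dist_even_iff (A.bull u v) (A.circ u v)
  have e6 := A.dist_even_iff u v
  suffices hs : Even (A.T.dist (A.bull u v) z + A.T.dist (A.circ u v) z)
      ↔ Even (A.T.dist u z + A.T.dist v z) by
    rw [Nat.even_iff, Nat.even_iff] at hs; omega
  rw [Nat.even_add, Nat.even_add, e1, e2, e3, e4]
  have hcol : ((A.bull u v) ∈ A.B ↔ (A.circ u v) ∈ A.B) ↔ (u ∈ A.B ↔ v ∈ A.B) := by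
    rw [← e5, ← e6]; exact hk2
  have helper : ∀ p q c : Prop, ((p ↔ c) ↔ (q ↔ c)) ↔ (p ↔ q) := by
    intro p q c
    by_cases hp : p <;> by_cases hq : q <;> by_cases hcc : c <;> simp [hp, hq, hcc]
  rw [helper, helper]
  exact hcol

lemma AltTree.memF_B {u s : V} (hu : u ∈ A.B) (hs : memF A u s) : s = u := by
  rcases hs with h | ⟨hW, _⟩
  · exact h
  · exact absurd hu (A.memW_iff.mp hW)

lemma AltTree.theta_cases {u a s : V} (z : V) (ha : memF A u a)
    (hmin : ∀ a', memF A u a' → A.T.dist a z ≤ A.T.dist a' z) (hs : memF A u s) :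
    (s = u ∧ A.T.dist s z = A.T.dist u z) ∨
    (s = a ∧ a ≠ u ∧ A.T.dist s z + 1 = A.T.dist u z) ∨
    (s ≠ u ∧ ¬(s = a ∧ a ≠ u) ∧ A.T.dist s z = A.T.dist u z + 1) := by
  rcases hs with rfl | ⟨huW, hadj⟩
  · exact Or.inl ⟨rfl, rfl⟩
  · have hsu : s ≠ u := hadj.ne'
    have c1 : A.T.dist s z = A.T.dist z s := SimpleGraph.dist_comm
    have c2 : A.T.dist u z = A.T.dist z u := SimpleGraph.dist_comm
    have c3 : A.T.dist a z = A.T.dist z a := SimpleGraph.dist_comm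
    rcases A.adj_dist z hadj with hfar | hclose
    · refine Or.inr (Or.inr ⟨hsu, ?_, by omega⟩)
      rintro ⟨rfl, -⟩
      have := hmin u (Or.inl rfl)
      omega
    · have hminz := hmin s (Or.inr ⟨huW, hadj⟩)
      have hau : a ≠ u := by
        intro he
        subst he
        omega
      rcases ha with rfl | ⟨-, hadja⟩
      · exact absurd rfl hau
      · rcases A.adj_dist z hadja with ha1 | ha2
        · omega
        · have hsa := A.unique_closer (z := z) hadj hadja (by omega) (by omega)
          exact Or.inr (Or.inl ⟨hsa, hau, by omega⟩)

end MidAux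

section ThetaMu
variable {V : Type*}

lemma theta_self (u a : V) : theta u a u = 0 := by
  unfold theta
  rw [if_neg (fun hc => hc.2 hc.1.symm), if_pos rfl]

lemma theta_min {u a : V} (hne : a ≠ u) : theta u a a = -1 := by
  unfold theta
  rw [if_pos ⟨rfl, hne⟩]

lemma theta_other {u a s : V} (h1 : s ≠ u) (h2 : ¬(s = a ∧ a ≠ u)) : theta u a s = 1 := by
  unfold theta
  rw [if_neg h2, if_neg h1]

lemma mu_eval_zero {u v a b s t : V}
    (hc : (s = a ∧ a ≠ u) ∨ (t = b ∧ b ≠ v) ∨ (s = u ∧ t = v)) : mu u v a b s t = 0 := by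
  unfold mu
  rw [if_pos hc]

lemma mu_eval_one {u v a b s t : V}
    (h1 : ¬((s = a ∧ a ≠ u) ∨ (t = b ∧ b ≠ v) ∨ (s = u ∧ t = v)))
    (h2 : (t = v ∧ u ≠ s ∧ s ≠ a) ∨ (s = u ∧ v ≠ t ∧ t ≠ b)) : mu u v a b s t = 1 := by
  unfold mu
  rw [if_neg h1, if_pos h2]

lemma mu_eval_two {u v a b s t : V}
    (h1 : ¬((s = a ∧ a ≠ u) ∨ (t = b ∧ b ≠ v) ∨ (s = u ∧ t = v)))
    (h2 : ¬((t = v ∧ u ≠ s ∧ s ≠ a) ∨ (s = u ∧ v ≠ t ∧ t ≠ b))) : mu u v a b s t = 2 := by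
  unfold mu
  rw [if_neg h1, if_neg h2]

end ThetaMu


section HArith
variable {h : ℤ → ℝ}

lemma hmono_le (hmono : ∀ t : ℤ, h (t - 1) ≤ h t) {s t : ℤ} (hst : s ≤ t) : h s ≤ h t := by
  have key : ∀ n : ℕ, ∀ s : ℤ, h s ≤ h (s + n) := by
    intro n
    induction n with
    | zero => simp
    | succ k ih =>
      intro s
      have h1 := ih s
      have h2 := hmono (s + k + 1)
      have : (s + (k : ℤ)) = s + k + 1 - 1 := by ring
      rw [this] at h1
      calc h s ≤ h (s + k + 1 - 1) := h1
        _ ≤ h (s + k + 1) := h2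
        _ = h (s + ((k : ℤ) + 1)) := by ring_nf
  have := key (t - s).toNat s
  rwa [Int.toNat_of_nonneg (by omega), show s + (t - s) = t by ring] at this

lemma hdh_mono (hconv : ∀ t : ℤ, 0 ≤ h (t + 1) - 2 * h t + h (t - 1)) {s t : ℤ} (hst : s ≤ t) :
    h s - h (s - 1) ≤ h t - h (t - 1) := by
  have key : ∀ n : ℕ, ∀ s : ℤ, h s - h (s - 1) ≤ h (s + n) - h (s + n - 1) := by
    intro n
    induction n with
    | zero => simp
    | succ k ih =>
      intro s
      have h1 := ih s
      have h2 := hconv (s + k)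
      have e1 : s + ((k : ℤ) + 1) = s + k + 1 := by ring
      have e2 : s + ((k : ℤ) + 1) - 1 = s + k := by ring
      push_cast
      rw [e2, e1]
      linarith
  have := key (t - s).toNat s
  rwa [Int.toNat_of_nonneg (by omega), show s + (t - s) = t by ring] at this

lemma hpair (hconv : ∀ t : ℤ, 0 ≤ h (t + 1) - 2 * h t + h (t - 1)) :
    ∀ n : ℕ, ∀ a b x y : ℤ, a + n = x → x + y = a + b → x ≤ y → h x + h y ≤ h a + h b := by
  intro n
  induction n with
  | zero =>
    intro a b x y hx hsum _
    have hxa : x = a := by omega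
    have hyb : y = b := by omega
    rw [hxa, hyb]
  | succ k ih =>
    intro a b x y hx hsum hxy
    have step : h x + h y ≤ h (x - 1) + h (y + 1) := by
      have := hdh_mono hconv (show x ≤ y + 1 by omega)
      have e : y + 1 - 1 = y := by ring
      rw [e] at this
      linarith
    have := ih a b (x - 1) (y + 1) (by omega) (by omega) (by omega)
    linarith

lemma hbalanced (hmono : ∀ t : ℤ, h (t - 1) ≤ h t)
    (hconv : ∀ t : ℤ, 0 ≤ h (t + 1) - 2 * h t + h (t - 1))
    {X Y A B : ℤ} (hXY : X ≤ Y) (hY : Y ≤ X + 1) (hsum : X + Y ≤ A + B)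
    (hpar : (X + Y) % 2 = (A + B) % 2) : h X + h Y ≤ h A + h B := by
  obtain ⟨D, hD⟩ : ∃ D : ℤ, 0 ≤ D ∧ X + Y + 2 * D = A + B := ⟨(A + B - X - Y) / 2, by omega⟩
  have h1 : h X ≤ h (X + D) := hmono_le hmono (by omega)
  have h2 : h Y ≤ h (Y + D) := hmono_le hmono (by omega)
  have h3 : h (X + D) + h (Y + D) ≤ h (min A B) + h (max A B) := by
    apply hpair hconv ((X + D) - min A B).toNat (min A B) (max A B) (X + D) (Y + D)
    · rw [Int.toNat_of_nonneg]
      · ring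
      · rcases le_total A B with hc | hc
        · rw [min_eq_left hc] at *; omega
        · rw [min_eq_right hc] at *; omega
    · rcases le_total A B with hc | hc
      · rw [min_eq_left hc, max_eq_right hc]; omega
      · rw [min_eq_right hc, max_eq_left hc]; omega
    · omega
  have h4 : h (min A B) + h (max A B) = h A + h B := by
    rcases le_total A B with hc | hc
    · rw [min_eq_left hc, max_eq_right hc]
    · rw [min_eq_right hc, max_eq_left hc]; ring
  linarith

lemma hkey (hmono : ∀ t : ℤ, h (t - 1) ≤ h t)
    (hconv : ∀ t : ℤ, 0 ≤ h (t + 1) - 2 * h t + h (t - 1))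
    (heven : ∀ t : ℤ, Odd t → h t = (h (t - 1) + h (t + 1)) / 2)
    {S T A B : ℤ} (hsum : S + T ≤ A + B) (hpar : (S + T) % 2 = (A + B) % 2)
    (hshape : (T ≤ S + 1 ∧ S ≤ T + 1) ∨ (S = T + 2 ∧ T % 2 = 0) ∨ (T = S + 2 ∧ S % 2 = 0)) :
    h S + h T ≤ h A + h B := by
  rcases hshape with ⟨h1, h2⟩ | ⟨h1, h2⟩ | ⟨h1, h2⟩
  · rcases le_total S T with hc | hc
    · exact hbalanced hmono hconv hc h1 hsum hpar
    · have := hbalanced (A := A) (B := B) hmono hconv hc h2 (by omega) (by omega)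
      linarith
  · have hodd : Odd (T + 1) := by rw [Int.odd_iff]; omega
    have he := heven (T + 1) hodd
    have e1 : T + 1 - 1 = T := by ring
    have e2 : T + 1 + 1 = T + 2 := by ring
    rw [e1, e2] at he
    have hb := hbalanced (A := A) (B := B) hmono hconv (le_refl (T + 1)) (by omega)
      (show (T + 1) + (T + 1) ≤ A + B by omega) (by omega)
    rw [h1]; linarith
  · have hodd : Odd (S + 1) := by rw [Int.odd_iff]; omega
    have he := heven (S + 1) hodd
    have e1 : S + 1 - 1 = S := by ring
    have e2 : S + 1 + 1 = S + 2 := by ring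
    rw [e1, e2] at he
    have hb := hbalanced (A := A) (B := B) hmono hconv (le_refl (S + 1)) (by omega)
      (show (S + 1) + (S + 1) ≤ A + B by omega) (by omega)
    rw [h1]; linarith

end HArith

/-- Theorem 2.14 (3).  Let `h : ℤ → ℝ` be nondecreasing, convex and
even, and let `z, w` be vertices of `T` in the same color class.  Then
`h_{T;z,w}(u,v) := h(d(u,z) + d(v,w))` is alternating L-convex on `T × T`; moreover,
for every `(u,v) ∈ T × T` with `D := d(u,z) + d(v,w)`, letting `a ∈ F(u)` be nearest
to `z` and `b ∈ F(v)` nearest to `w`, for all `(s,t) ∈ F(u) × F(v)` the difference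
`h_{T;z,w}(s,t) − h(D)` is given by the stated case formula. -/
theorem stmt7 {V : Type*} (A : AltTree V) (h : ℤ → ℝ)
    (hmono : ∀ t : ℤ, h (t - 1) ≤ h t)
    (hconv : ∀ t : ℤ, 0 ≤ h (t + 1) - 2 * h t + h (t - 1))
    (heven : ∀ t : ℤ, Odd t → h t = (h (t - 1) + h (t + 1)) / 2)
    (z w : V) (hzw : (z ∈ A.B ∧ w ∈ A.B) ∨ (z ∈ A.W ∧ w ∈ A.W)) :
    IsLConvex2 A (fun u v => h (A.T.dist u z + A.T.dist v w)) ∧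
    ∀ u v a b : V,
      (memF A u a ∧ ∀ a', memF A u a' → A.T.dist a z ≤ A.T.dist a' z) →
      (memF A v b ∧ ∀ b', memF A v b' → A.T.dist b w ≤ A.T.dist b' w) →
      ∀ s t : V, memF A u s → memF A v t →
        ((u ∈ A.W → v ∈ A.B →
            h (A.T.dist s z + A.T.dist t w) - h (A.T.dist u z + A.T.dist v w) =
              dh h (A.T.dist u z + A.T.dist v w) * theta u a s) ∧
         (u ∈ A.B → v ∈ A.W →
            h (A.T.dist s z + A.T.dist t w) - h (A.T.dist u z + A.T.dist v w) =
              dh h (A.T.dist u z + A.T.dist v w) * theta v b t) ∧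
         (u ∈ A.W → v ∈ A.W →
            h (A.T.dist s z + A.T.dist t w) - h (A.T.dist u z + A.T.dist v w) =
              dh h (A.T.dist u z + A.T.dist v w) * (theta u a s + theta v b t)
                + d2h h (A.T.dist u z + A.T.dist v w) * mu u v a b s t) ∧
         (u ∈ A.B → v ∈ A.B →
            h (A.T.dist s z + A.T.dist t w) - h (A.T.dist u z + A.T.dist v w) = 0)) := by
  have hzwB : (z ∈ A.B ↔ w ∈ A.B) := by
    rcases hzw with ⟨p1, p2⟩ | ⟨p1, p2⟩
    · exact iff_of_true p1 p2
    · exact iff_of_false (A.memW_iff.mp p1) (A.memW_iff.mp p2)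
  constructor
  · intro u₁ u₂ v₁ v₂
    dsimp only
    apply hkey hmono hconv heven
    · have h1 := A.mid_sum_le u₁ v₁ z
      have h2 := A.mid_sum_le u₂ v₂ w
      omega
    · have h1 := A.mid_parity u₁ v₁ z
      have h2 := A.mid_parity u₂ v₂ w
      omega
    · have s1 := A.mid_shape u₁ v₁ z
      have s2 := A.mid_shape u₂ v₂ w
      by_cases h12 : A.T.dist (A.bull u₁ v₁) z + A.T.dist (A.bull u₂ v₂) w
          = A.T.dist (A.circ u₁ v₁) z + A.T.dist (A.circ u₂ v₂) w + 2
      · right; left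
        have hstep1 : A.T.dist (A.bull u₁ v₁) z = A.T.dist (A.circ u₁ v₁) z + 1 := by omega
        have hstep2 : A.T.dist (A.bull u₂ v₂) w = A.T.dist (A.circ u₂ v₂) w + 1 := by omega
        have hne1 : A.circ u₁ v₁ ≠ A.bull u₁ v₁ := by
          intro he; rw [he] at hstep1; omega
        have hne2 : A.circ u₂ v₂ ≠ A.bull u₂ v₂ := by
          intro he; rw [he] at hstep2; omega
        have hw1 : A.circ u₁ v₁ ∈ A.W := by
          rcases A.circ_le_bull u₁ v₁ with he | ⟨-, hW, -⟩
          · exact absurd he hne1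
          · exact hW
        have hw2 : A.circ u₂ v₂ ∈ A.W := by
          rcases A.circ_le_bull u₂ v₂ with he | ⟨-, hW, -⟩
          · exact absurd he hne2
          · exact hW
        have e1 := A.dist_even_iff (A.circ u₁ v₁) z
        have e2 := A.dist_even_iff (A.circ u₂ v₂) w
        have hb1 := A.memW_iff.mp hw1
        have hb2 := A.memW_iff.mp hw2
        have hEq : Even (A.T.dist (A.circ u₁ v₁) z) ↔ Even (A.T.dist (A.circ u₂ v₂) w) := by
          rw [e1, e2, iff_false_intro hb1, iff_false_intro hb2, false_iff, false_iff,
            not_iff_not]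
          exact hzwB
        have hev : Even (A.T.dist (A.circ u₁ v₁) z + A.T.dist (A.circ u₂ v₂) w) :=
          (Nat.even_add).mpr hEq
        rw [Nat.even_iff] at hev
        constructor
        · omega
        · omega
      · by_cases h21 : A.T.dist (A.circ u₁ v₁) z + A.T.dist (A.circ u₂ v₂) w
            = A.T.dist (A.bull u₁ v₁) z + A.T.dist (A.bull u₂ v₂) w + 2
        · right; right
          have hstep1 : A.T.dist (A.circ u₁ v₁) z = A.T.dist (A.bull u₁ v₁) z + 1 := by omega
          have hstep2 : A.T.dist (A.circ u₂ v₂) w = A.T.dist (A.bull u₂ v₂) w + 1 := by omega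
          have hne1 : A.circ u₁ v₁ ≠ A.bull u₁ v₁ := by
            intro he; rw [he] at hstep1; omega
          have hne2 : A.circ u₂ v₂ ≠ A.bull u₂ v₂ := by
            intro he; rw [he] at hstep2; omega
          have hw1 : A.bull u₁ v₁ ∈ A.B := by
            rcases A.circ_le_bull u₁ v₁ with he | ⟨-, -, hB⟩
            · exact absurd he hne1
            · exact hB
          have hw2 : A.bull u₂ v₂ ∈ A.B := by
            rcases A.circ_le_bull u₂ v₂ with he | ⟨-, -, hB⟩
            · exact absurd he hne2
            · exact hB
          have e1 := A.dist_even_iff (A.bull u₁ v₁) z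
          have e2 := A.dist_even_iff (A.bull u₂ v₂) w
          have hEq : Even (A.T.dist (A.bull u₁ v₁) z) ↔ Even (A.T.dist (A.bull u₂ v₂) w) := by
            rw [e1, e2, iff_true_intro hw1, iff_true_intro hw2, true_iff, true_iff]
            exact hzwB
          have hev : Even (A.T.dist (A.bull u₁ v₁) z + A.T.dist (A.bull u₂ v₂) w) :=
            (Nat.even_add).mpr hEq
          rw [Nat.even_iff] at hev
          constructor
          · omega
          · omega
        · left
          constructor
          · omega
          · omega
  · intro u v a b ⟨haF, hamin⟩ ⟨hbF, hbmin⟩ s t hsF htF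
    have e1 := A.dist_even_iff u z
    have e2 := A.dist_even_iff v w
    refine ⟨?_, ?_, ?_, ?_⟩
    · -- u ∈ W, v ∈ B
      intro huW hvB
      have htv : t = v := A.memF_B hvB htF
      rw [htv]
      have hub := A.memW_iff.mp huW
      have hDoddN : ¬ Even (A.T.dist u z + A.T.dist v w) := by
        rw [Nat.even_add, e1, e2]
        simp only [iff_false_intro hub, iff_true_intro hvB, false_iff, true_iff]
        intro hn
        by_cases hz : z ∈ A.B
        · exact hn.mpr (hzwB.mp hz) hz
        · exact hz (hzwB.mpr (hn.mp hz))
      have hDodd : Odd ((A.T.dist u z : ℤ) + (A.T.dist v w : ℤ)) := by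
        rw [Int.odd_iff]
        rw [Nat.even_iff] at hDoddN
        omega
      have he := heven _ hDodd
      rcases A.theta_cases z haF hamin hsF with ⟨hs1, hd1⟩ | ⟨hs1, hsne, hd1⟩ | ⟨hsne, hsna, hd1⟩
      · rw [hs1, theta_self, mul_zero, sub_self]
      · rw [hs1] at hd1 ⊢
        rw [theta_min hsne]
        have harg : ((A.T.dist a z : ℤ) + (A.T.dist v w : ℤ))
            = ((A.T.dist u z : ℤ) + (A.T.dist v w : ℤ)) - 1 := by push_cast; omega
        rw [harg]
        simp only [dh]
        linarith
      · rw [theta_other hsne hsna]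
        have harg : ((A.T.dist s z : ℤ) + (A.T.dist v w : ℤ))
            = ((A.T.dist u z : ℤ) + (A.T.dist v w : ℤ)) + 1 := by push_cast; omega
        rw [harg, mul_one]
        simp only [dh]
        linarith [he]
    · -- u ∈ B, v ∈ W
      intro huB hvW
      have hsu : s = u := A.memF_B huB hsF
      rw [hsu]
      have hvb := A.memW_iff.mp hvW
      have hDoddN : ¬ Even (A.T.dist u z + A.T.dist v w) := by
        rw [Nat.even_add, e1, e2]
        simp only [iff_true_intro huB, iff_false_intro hvb, false_iff, true_iff]
        intro hn
        by_cases hz : z ∈ A.B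
        · exact (hn.mp hz) (hzwB.mp hz)
        · exact hz (hn.mpr (fun hw => hz (hzwB.mpr hw)))
      have hDodd : Odd ((A.T.dist u z : ℤ) + (A.T.dist v w : ℤ)) := by
        rw [Int.odd_iff]
        rw [Nat.even_iff] at hDoddN
        omega
      have he := heven _ hDodd
      rcases A.theta_cases w hbF hbmin htF with ⟨ht1, hd2⟩ | ⟨ht1, htne, hd2⟩ | ⟨htne, htna, hd2⟩
      · rw [ht1, theta_self, mul_zero, sub_self]
      · rw [ht1] at hd2 ⊢
        rw [theta_min htne]
        have harg : ((A.T.dist u z : ℤ) + (A.T.dist b w : ℤ))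
            = ((A.T.dist u z : ℤ) + (A.T.dist v w : ℤ)) - 1 := by push_cast; omega
        rw [harg]
        simp only [dh]
        linarith
      · rw [theta_other htne htna]
        have harg : ((A.T.dist u z : ℤ) + (A.T.dist t w : ℤ))
            = ((A.T.dist u z : ℤ) + (A.T.dist v w : ℤ)) + 1 := by push_cast; omega
        rw [harg, mul_one]
        simp only [dh]
        linarith [he]
    · -- u ∈ W, v ∈ W
      intro huW hvW
      have hub := A.memW_iff.mp huW
      have hvb := A.memW_iff.mp hvW
      have hDeN : Even (A.T.dist u z + A.T.dist v w) := by
        rw [Nat.even_add, e1, e2]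
        simp only [iff_false_intro hub, iff_false_intro hvb, false_iff]
        constructor
        · intro hz hw; exact hz (hzwB.mpr hw)
        · intro hw hz; exact hw (hzwB.mp hz)
      rw [Nat.even_iff] at hDeN
      set D : ℤ := (A.T.dist u z : ℤ) + (A.T.dist v w : ℤ) with hDdef
      have hm := heven (D - 1) (by rw [Int.odd_iff, hDdef]; omega)
      have hp := heven (D + 1) (by rw [Int.odd_iff, hDdef]; omega)
      rw [show D - 1 - 1 = D - 2 by ring, show D - 1 + 1 = D by ring] at hm
      rw [show D + 1 - 1 = D by ring, show D + 1 + 1 = D + 2 by ring] at hp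
      have hm' : h (D - 2) + h D = 2 * h (D - 1) := by linarith
      have hp' : h D + h (D + 2) = 2 * h (D + 1) := by linarith
      rcases A.theta_cases z haF hamin hsF with ⟨hs1, hd1⟩ | ⟨hs1, hsne, hd1⟩ | ⟨hsne, hsna, hd1⟩ <;>
        rcases A.theta_cases w hbF hbmin htF with ⟨ht1, hd2⟩ | ⟨ht1, htne, hd2⟩ | ⟨htne, htna, hd2⟩
      · -- s = u, t = v
        rw [hs1, ht1, theta_self, theta_self, mu_eval_zero (Or.inr (Or.inr ⟨rfl, rfl⟩)),
          ← hDdef]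
        simp only [dh, d2h]
        ring
      · -- s = u, t = b ≠ v
        rw [hs1] at hd1 ⊢
        rw [ht1] at hd2 ⊢
        rw [theta_self, theta_min htne, mu_eval_zero (Or.inr (Or.inl ⟨rfl, htne⟩))]
        have harg : ((A.T.dist u z : ℤ) + (A.T.dist b w : ℤ)) = D - 1 := by
          rw [hDdef]; push_cast; omega
        rw [harg]
        simp only [dh, d2h]
        ring
      · -- s = u, t far
        rw [hs1] at hd1 ⊢
        have h1 : ¬((u = a ∧ a ≠ u) ∨ (t = b ∧ b ≠ v) ∨ (u = u ∧ t = v)) := by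
          rintro (⟨ha1, ha2⟩ | hX | ⟨-, h3⟩)
          · exact ha2 ha1.symm
          · exact htna hX
          · exact htne h3
        have htb : t ≠ b := fun hh => htna ⟨hh, fun hbv => htne (hh.trans hbv)⟩
        rw [theta_self, theta_other htne htna, mu_eval_one h1 (Or.inr ⟨rfl, Ne.symm htne, htb⟩)]
        have harg : ((A.T.dist u z : ℤ) + (A.T.dist t w : ℤ)) = D + 1 := by
          rw [hDdef]; push_cast; omega
        rw [harg]
        simp only [dh, d2h]
        ring
      · -- s = a ≠ u, t = v
        rw [hs1] at hd1 ⊢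
        rw [ht1] at hd2 ⊢
        rw [theta_min hsne, theta_self, mu_eval_zero (Or.inl ⟨rfl, hsne⟩)]
        have harg : ((A.T.dist a z : ℤ) + (A.T.dist v w : ℤ)) = D - 1 := by
          rw [hDdef]; push_cast; omega
        rw [harg]
        simp only [dh, d2h]
        ring
      · -- s = a ≠ u, t = b ≠ v
        rw [hs1] at hd1 ⊢
        rw [ht1] at hd2 ⊢
        rw [theta_min hsne, theta_min htne, mu_eval_zero (Or.inl ⟨rfl, hsne⟩)]
        have harg : ((A.T.dist a z : ℤ) + (A.T.dist b w : ℤ)) = D - 2 := by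
          rw [hDdef]; push_cast; omega
        rw [harg]
        simp only [dh, d2h]
        linarith
      · -- s = a ≠ u, t far
        rw [hs1] at hd1 ⊢
        rw [theta_min hsne, theta_other htne htna, mu_eval_zero (Or.inl ⟨rfl, hsne⟩)]
        have harg : ((A.T.dist a z : ℤ) + (A.T.dist t w : ℤ)) = D := by
          rw [hDdef]; push_cast; omega
        rw [harg]
        simp only [dh, d2h]
        ring
      · -- s far, t = v
        rw [ht1] at hd2 ⊢
        have h1 : ¬((s = a ∧ a ≠ u) ∨ (v = b ∧ b ≠ v) ∨ (s = u ∧ v = v)) := by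
          rintro (hX | ⟨hb1, hb2⟩ | ⟨h3, -⟩)
          · exact hsna hX
          · exact hb2 hb1.symm
          · exact hsne h3
        have hsa : s ≠ a := by
          intro hh
          have hau : a = u := by by_contra hau; exact hsna ⟨hh, hau⟩
          exact hsne (hh.trans hau)
        rw [theta_other hsne hsna, theta_self, mu_eval_one h1 (Or.inl ⟨rfl, Ne.symm hsne, hsa⟩)]
        have harg : ((A.T.dist s z : ℤ) + (A.T.dist v w : ℤ)) = D + 1 := by
          rw [hDdef]; push_cast; omega
        rw [harg]
        simp only [dh, d2h]
        ring
      · -- s far, t = b ≠ v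
        rw [ht1] at hd2 ⊢
        rw [theta_other hsne hsna, theta_min htne, mu_eval_zero (Or.inr (Or.inl ⟨rfl, htne⟩))]
        have harg : ((A.T.dist s z : ℤ) + (A.T.dist b w : ℤ)) = D := by
          rw [hDdef]; push_cast; omega
        rw [harg]
        simp only [dh, d2h]
        ring
      · -- s far, t far
        have h1 : ¬((s = a ∧ a ≠ u) ∨ (t = b ∧ b ≠ v) ∨ (s = u ∧ t = v)) := by
          rintro (hX | hX | ⟨h3, -⟩)
          · exact hsna hX
          · exact htna hX
          · exact hsne h3
        have h2 : ¬((t = v ∧ u ≠ s ∧ s ≠ a) ∨ (s = u ∧ v ≠ t ∧ t ≠ b)) := by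
          rintro (⟨h3, -⟩ | ⟨h3, -⟩)
          · exact htne h3
          · exact hsne h3
        rw [theta_other hsne hsna, theta_other htne htna, mu_eval_two h1 h2]
        have harg : ((A.T.dist s z : ℤ) + (A.T.dist t w : ℤ)) = D + 2 := by
          rw [hDdef]; push_cast; omega
        rw [harg]
        simp only [dh, d2h]
        linarith
    · -- u ∈ B, v ∈ B
      intro huB hvB
      have hs1 := A.memF_B huB hsF
      have ht1 := A.memF_B hvB htF
      subst hs1
      subst ht1
      exact sub_self _
end

section
/- If f is a 𝐤-submodular function on S_𝐤, then for all x,y ∈ S_𝐤: f(x) + f(y) ≥ f(x∧y) + (1/2)·f(x⊔(x⊔y)) + (1/2)·f((x⊔y)⊔y). -/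
/-- The meet on `S_k` (modelled as `Option α`, with `none` the minimal element `0`):
`u ∧ v = u` if `u = v` and `u ∧ v = 0` otherwise. -/
def kmeet {α : Type*} [DecidableEq α] (u v : Option α) : Option α :=
  if u = v then u else none

/-- The partial join `⊔` on `S_k`: `u ⊔ v = u ∨ v` if `u, v` are comparable and
`u ⊔ v = 0` otherwise. -/
def kjoin {α : Type*} [DecidableEq α] : Option α → Option α → Option α
  | none, w => w
  | some a, none => some a
  | some a, some b => if a = b then some a else none

/-- `𝐤`-submodularity on `S_𝐤 = Π i, S_{k_i}`. -/
def IsKSubmodular {n : ℕ} {α : Fin n → Type*} [∀ i, DecidableEq (α i)]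
    (f : (∀ i, Option (α i)) → WithTop ℝ) : Prop :=
  ∀ x y, f (fun i => kmeet (x i) (y i)) + f (fun i => kjoin (x i) (y i)) ≤ f x + f y

lemma key1' {α : Type*} [DecidableEq α] (u v : Option α) :
    kmeet (kmeet u (kjoin u v)) (kmeet (kjoin u v) v) = kmeet u v := by
  cases u <;> cases v <;> simp [kmeet, kjoin] <;> split <;> simp_all [kmeet, kjoin]

lemma key2' {α : Type*} [DecidableEq α] (u v : Option α) :
    kjoin (kmeet u (kjoin u v)) (kmeet (kjoin u v) v) = kjoin u v := by
  cases u <;> cases v <;> simp [kmeet, kjoin] <;> split <;> simp_all [kmeet, kjoin]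

/-- Lemma 2.16.  If `f` is a `𝐤`-submodular function on `S_𝐤`,
then `f(x) + f(y) ≥ f(x ∧ y) + (1/2)·f(x ⊔ (x ⊔ y)) + (1/2)·f((x ⊔ y) ⊔ y)`
for all `x, y ∈ S_𝐤`. -/
theorem stmt9 {n : ℕ} {α : Fin n → Type*} [∀ i, DecidableEq (α i)]
    (f : (∀ i, Option (α i)) → WithTop ℝ) (hf : IsKSubmodular f) :
    ∀ x y : ∀ i, Option (α i),
      f (fun i => kmeet (x i) (y i))
        + ((1 / 2 : ℝ) : WithTop ℝ) * f (fun i => kjoin (x i) (kjoin (x i) (y i)))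
        + ((1 / 2 : ℝ) : WithTop ℝ) * f (fun i => kjoin (kjoin (x i) (y i)) (y i))
      ≤ f x + f y := by
  intro x y
  by_cases htop : f x + f y = ⊤
  · rw [htop]; exact le_top
  have h1 := hf x y
  have h2 := hf x (fun i => kjoin (x i) (y i))
  have h3 := hf (fun i => kjoin (x i) (y i)) y
  have h4 := hf (fun i => kmeet (x i) (kjoin (x i) (y i)))
    (fun i => kmeet (kjoin (x i) (y i)) (y i))
  simp only [key1', key2'] at h4
  -- finiteness
  have hxy : f x + f y < ⊤ := lt_top_iff_ne_top.2 htop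
  have hx : f x < ⊤ := (WithTop.add_lt_top.1 hxy).1
  have hy : f y < ⊤ := (WithTop.add_lt_top.1 hxy).2
  have hmj := WithTop.add_lt_top.1 (lt_of_le_of_lt h1 hxy)
  have hm := hmj.1
  have hj := hmj.2
  have h2' := WithTop.add_lt_top.1 (lt_of_le_of_lt h2 (WithTop.add_lt_top.2 ⟨hx, hj⟩))
  have h3' := WithTop.add_lt_top.1 (lt_of_le_of_lt h3 (WithTop.add_lt_top.2 ⟨hj, hy⟩))
  obtain ⟨p, hp⟩ := WithTop.ne_top_iff_exists.1 h2'.1.ne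
  obtain ⟨J1, hJ1⟩ := WithTop.ne_top_iff_exists.1 h2'.2.ne
  obtain ⟨q, hq⟩ := WithTop.ne_top_iff_exists.1 h3'.1.ne
  obtain ⟨J2, hJ2⟩ := WithTop.ne_top_iff_exists.1 h3'.2.ne
  obtain ⟨a, ha⟩ := WithTop.ne_top_iff_exists.1 hx.ne
  obtain ⟨b, hb⟩ := WithTop.ne_top_iff_exists.1 hy.ne
  obtain ⟨mm, hmm⟩ := WithTop.ne_top_iff_exists.1 hm.ne
  obtain ⟨jj, hjj⟩ := WithTop.ne_top_iff_exists.1 hj.ne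
  simp only [← hp, ← hJ1, ← hq, ← hJ2, ← ha, ← hb, ← hmm, ← hjj] at h1 h2 h3 h4 ⊢
  simp only [← WithTop.coe_mul, ← WithTop.coe_add, WithTop.coe_le_coe] at h1 h2 h3 h4 ⊢
  linarith
end

section
/- Let g be an alternating L-convex function on T^n, let x ∈ dom g satisfy g(x) = min_{y ∈ F(x)} g(y), and let x = x^0, x^1, x^2, … be a sequence generated by the steepest descent algorithm applied to (g,x), i.e., each x^{i+1} is a minimizer of g over I(x^i) ∪ F(x^i) and g(x^{i+1}) < g(x^i). Then for every k ≥ 1 and every z ∈ I(x^k) ∪ F(x^k) with g(z) < g(x^k), it holds d(x,z) = k+1. -/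
open SimpleGraph

/-!
Since `x` minimizes `g` over `F(x)` and every step strictly decreases `g`, steepest descent
alternates: the step from `x^k` goes down for even `k` and up for odd `k`, and `x^k` minimizes `g`
over `F(x^k)`, resp. `I(x^k)`. Exchanging the colours and `•` with `∘` (the dual tree) turns odd
steps into even ones, so consider even `k`.

By induction on `k`, `x^k` minimizes `g` over the ball of radius `k` around `x`. For `y` in the ball
of radius `k + 1`, the point `x^k • y` lies in the ball of radius `k` (the coordinates of `x^k` at
full distance `k` are black, as they arrived by an upward step), so L-convexity gives
`g (x^k ∘ y) ≤ g y`; since `x^k ∘ y` is closer to `x^k` than `y`, induction on `d(x^k, y)` ends in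
`I(x^k)`, where `x^(k+1)` is minimal. The tree structure enters through the gate property:
a vertex on a geodesic from `u` to `v` lies on a geodesic from any `p` to `u` or to `v`.

Hence `z ∈ I(x^k) ∪ F(x^k)` with `g z < g (x^k)` lies outside the ball of radius `k`, but within
distance `d(x, x^k) + 1 ≤ k + 1` of `x`.
-/

namespace SimpleGraph

variable {V : Type*} {G : SimpleGraph V}

lemma Connected.exists_adj_dist_add_one_eq (hG : G.Connected) {u v : V} (h : u ≠ v) :
    ∃ w, G.Adj u w ∧ G.dist w v + 1 = G.dist u v := by
  obtain ⟨p, -, hp⟩ := hG.exists_path_of_dist u v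
  cases p with
  | nil => exact absurd rfl h
  | @cons _ w _ hadj q =>
    refine ⟨w, hadj, le_antisymm ?_ ?_⟩
    · have := dist_le q
      rw [Walk.length_cons] at hp
      omega
    · have := hG.dist_triangle (u := u) (v := w) (w := v)
      rw [dist_eq_one_iff_adj.mpr hadj] at this
      omega

lemma IsTree.eq_of_adj_of_dist_add_one_eq (hG : G.IsTree) {p s a b : V} (ha : G.Adj s a)
    (hb : G.Adj s b) (ha' : G.dist p a + 1 = G.dist p s) (hb' : G.dist p b + 1 = G.dist p s) :
    a = b := by
  obtain ⟨wa, -, hwa⟩ := hG.connected.exists_path_of_dist a p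
  obtain ⟨wb, -, hwb⟩ := hG.connected.exists_path_of_dist b p
  have hpath : ∀ {c} (hc : G.Adj s c) (w : G.Walk c p), w.length = G.dist c p →
      G.dist p c + 1 = G.dist p s → (Walk.cons hc w).IsPath := fun hc w hw hc' =>
    (Walk.cons hc w).isPath_of_length_eq_dist (by rw [Walk.length_cons, hw, dist_comm, hc',
      dist_comm])
  have := (hG.existsUnique_path s p).unique (hpath ha wa hwa ha') (hpath hb wb hwb hb')
  simpa using congrArg Walk.snd this

lemma IsTree.dist_eq_add_or_dist_add_one_eq (hG : G.IsTree) {p s c : V} (hsc : G.Adj s c)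
    (hc : G.dist p c + 1 = G.dist p s) (u : V) :
    G.dist p u = G.dist p s + G.dist s u ∨ G.dist c u + 1 = G.dist s u := by
  induction hm : G.dist s u using Nat.strong_induction_on generalizing u with
  | _ m ih =>
  subst hm
  rcases eq_or_ne u s with rfl | hus
  · simp
  have hconn := hG.connected
  obtain ⟨u', huu', hu'⟩ := hconn.exists_adj_dist_add_one_eq hus
  have hsu : G.dist s u = G.dist u s := dist_comm
  have hsu' : G.dist s u' = G.dist u' s := dist_comm
  have h1u : G.dist u' u = 1 := dist_eq_one_iff_adj.mpr huu'.symm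
  rcases ih _ (by omega) u' rfl with hfar | hnear
  · rcases hG.dist_eq_dist_add_one_of_adj p huu' with hpu | hpu
    · left
      omega
    rcases eq_or_ne u' s with rfl | hu's
    · right
      obtain rfl := hG.eq_of_adj_of_dist_add_one_eq huu'.symm hsc hpu.symm hc
      simpa using h1u.symm
    · exfalso
      obtain ⟨u'', hu'u'', hu''⟩ := hconn.exists_adj_dist_add_one_eq hu's
      have hs'' : G.dist s u'' = G.dist u'' s := dist_comm
      have hp'' := hconn.dist_triangle (u := p) (v := s) (w := u'')
      have hpu'' : G.dist p u'' + 1 = G.dist p u' := by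
        rcases hG.dist_eq_dist_add_one_of_adj p hu'u'' with h | h <;> omega
      obtain rfl := hG.eq_of_adj_of_dist_add_one_eq huu'.symm hu'u'' hpu.symm hpu''
      omega
  · right
    have := hconn.dist_triangle (u := c) (v := u') (w := u)
    have := hconn.dist_triangle (u := s) (v := c) (w := u)
    rw [dist_eq_one_iff_adj.mpr hsc] at this
    omega

lemma IsTree.dist_eq_add_or_dist_eq_add (hG : G.IsTree) {u v s : V}
    (hs : G.dist u s + G.dist s v = G.dist u v) (p : V) :
    G.dist p u = G.dist p s + G.dist s u ∨ G.dist p v = G.dist p s + G.dist s v := by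
  rcases eq_or_ne s p with rfl | hsp
  · simp
  obtain ⟨c, hsc, hc⟩ := hG.connected.exists_adj_dist_add_one_eq hsp
  have hc' : G.dist p c + 1 = G.dist p s := by rwa [dist_comm, dist_comm (u := p)]
  rcases hG.dist_eq_add_or_dist_add_one_eq hsc hc' u with hu | hu
  · exact Or.inl hu
  rcases hG.dist_eq_add_or_dist_add_one_eq hsc hc' v with hv | hv
  · exact Or.inr hv
  have := hG.connected.dist_triangle (u := u) (v := c) (w := v)
  have : G.dist u c = G.dist c u := dist_comm
  have : G.dist u s = G.dist s u := dist_comm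
  omega

lemma IsTree.dist_le_of_dist_add_dist_eq (hG : G.IsTree) {p u v s : V} {c : ℕ}
    (hs : G.dist u s + G.dist s v = G.dist u v) (hu : G.dist p u ≤ c) (hv : G.dist p v ≤ c) :
    G.dist p s ≤ c := by
  rcases hG.dist_eq_add_or_dist_eq_add hs p with h | h <;> omega

end SimpleGraph

namespace AltTree

variable {V : Type*} (A : AltTree V)

def dual : AltTree V where
  T := A.T
  tree := A.tree
  B := A.W
  W := A.B
  color_disjoint := A.color_disjoint.symm
  color_cover := by rw [Set.union_comm, A.color_cover]
  adj_colors _ _ h := (A.adj_colors h).symm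
  bull := A.circ
  circ := A.bull
  mid_spec u v := (A.mid_spec u v).symm
  mid_close u v := by rw [SimpleGraph.dist_comm]; exact A.mid_close u v
  circ_le_bull u v := (A.circ_le_bull u v).imp Eq.symm fun h => ⟨h.1.symm, h.2.2, h.2.1⟩

lemma dual_le {u v : V} : A.dual.le u v ↔ A.le v u := by
  simp only [le, dual, SimpleGraph.adj_comm]
  tauto

lemma le_trans {u v w : V} (huv : A.le u v) (hvw : A.le v w) : A.le u w := by
  rcases huv with rfl | ⟨huv, hu, hv⟩
  · exact hvw
  rcases hvw with rfl | ⟨-, hv', -⟩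
  · exact Or.inr ⟨huv, hu, hv⟩
  · exact absurd hv' (Set.disjoint_left.mp A.color_disjoint hv)

lemma dist_bull_add_dist_bull (u v : V) :
    A.T.dist u (A.bull u v) + A.T.dist (A.bull u v) v = A.T.dist u v := by
  have hconn := A.tree.connected
  have := hconn.dist_triangle (u := u) (v := A.bull u v) (w := v)
  have := hconn.dist_triangle (u := u) (v := A.circ u v) (w := A.bull u v)
  have := hconn.dist_triangle (u := A.bull u v) (v := A.circ u v) (w := v)
  rcases A.mid_spec u v with ⟨h, -⟩ | ⟨h, -⟩ <;> omega

lemma dist_circ_add_dist_circ (u v : V) :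
    A.T.dist u (A.circ u v) + A.T.dist (A.circ u v) v = A.T.dist u v :=
  A.dual.dist_bull_add_dist_bull u v

lemma two_mul_dist_circ_le (u v : V) : 2 * A.T.dist u (A.circ u v) ≤ A.T.dist u v + 1 := by
  have := A.tree.connected.dist_triangle (u := u) (v := A.bull u v) (w := A.circ u v)
  have := A.mid_close u v
  rcases A.mid_spec u v with ⟨h, h'⟩ | ⟨h, h'⟩ <;> omega

lemma two_mul_dist_bull_le (u v : V) : 2 * A.T.dist u (A.bull u v) ≤ A.T.dist u v + 1 :=
  A.dual.two_mul_dist_circ_le u v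

lemma le_bull_of_dist_le_one {u v : V} (h : A.T.dist u v ≤ 1) : A.le u (A.bull u v) := by
  have hconn := A.tree.connected
  rcases eq_or_ne u (A.bull u v) with hb | hb
  · exact Or.inl hb
  have hsum := A.dist_bull_add_dist_bull u v
  have hub := hconn.pos_dist_of_ne hb
  obtain hbv : A.bull u v = v := hconn.dist_eq_zero_iff.mp (by omega)
  rw [hbv] at hb ⊢
  rcases A.circ_le_bull u v with hcb | ⟨hadj, hcW, hbB⟩
  · rcases A.mid_spec u v with ⟨-, h'⟩ | ⟨-, h'⟩ <;>
      simp only [hcb, hbv, SimpleGraph.dist_self, hconn.dist_eq_zero_iff] at h' <;>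
      exact absurd h' hb
  · rw [hbv] at hadj hbB
    have hsum' := A.dist_circ_add_dist_circ u v
    rw [SimpleGraph.dist_eq_one_iff_adj.mpr hadj] at hsum'
    have hcu : u = A.circ u v := hconn.dist_eq_zero_iff.mp (by omega)
    rw [← hcu] at hadj hcW
    exact Or.inr ⟨hadj, hcW, hbB⟩

lemma circ_le_of_dist_le_one {u v : V} (h : A.T.dist u v ≤ 1) : A.le (A.circ u v) u :=
  A.dual_le.mp (A.dual.le_bull_of_dist_le_one h)

lemma dist_le_one_of_le {u v : V} (h : A.le u v) : A.T.dist u v ≤ 1 := by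
  rcases h with rfl | ⟨hadj, -, -⟩
  · simp
  · exact (SimpleGraph.dist_eq_one_iff_adj.mpr hadj).le

/-- The only way for `q • r` to leave the ball is `q • r = r` with `q` white and `r` one step
farther from `p`; `hfront` rules this out. -/
lemma dist_bull_le {p q r : V} {k : ℕ} (hk : 0 < k) (hq : A.T.dist p q ≤ k)
    (hr : A.T.dist p r ≤ k + 1) (hfront : q ≠ p → A.T.dist p q = k → q ∈ A.B) :
    A.T.dist p (A.bull q r) ≤ k := by
  have hconn := A.tree.connected
  rcases A.tree.dist_eq_add_or_dist_eq_add (A.dist_bull_add_dist_bull q r) p with h | h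
  · omega
  rcases eq_or_ne (A.bull q r) r with hbr | hbr
  · have hqr : A.T.dist q r ≤ 1 := by
      have := A.two_mul_dist_bull_le q r
      rw [hbr] at this
      omega
    have hle := A.le_bull_of_dist_le_one hqr
    rw [hbr] at hle ⊢
    rcases hle with rfl | ⟨-, hqW, -⟩
    · exact hq
    have := hconn.dist_triangle (u := p) (v := q) (w := r)
    by_contra hlt
    have hqk : A.T.dist p q = k := by omega
    have hqp : q ≠ p := by
      rintro rfl
      simp only [SimpleGraph.dist_self] at hqk
      omega
    exact Set.disjoint_left.mp A.color_disjoint (hfront hqp hqk) hqW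
  · have := hconn.pos_dist_of_ne hbr
    omega

variable {n : ℕ}

lemma dist_le_distP (x y : Fin n → V) (i : Fin n) : A.T.dist (x i) (y i) ≤ A.distP x y :=
  Finset.le_sup (f := fun i => A.T.dist (x i) (y i)) (Finset.mem_univ i)

lemma distP_le_iff {x y : Fin n → V} {c : ℕ} :
    A.distP x y ≤ c ↔ ∀ i, A.T.dist (x i) (y i) ≤ c := by
  simp [distP]

lemma distP_comm (x y : Fin n → V) : A.distP x y = A.distP y x := by
  simp only [distP, SimpleGraph.dist_comm]

lemma distP_triangle (x y z : Fin n → V) : A.distP x z ≤ A.distP x y + A.distP y z :=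
  A.distP_le_iff.2 fun i => A.tree.connected.dist_triangle.trans
    (add_le_add (A.dist_le_distP x y i) (A.dist_le_distP y z i))

lemma eq_of_distP_le_zero {x y : Fin n → V} (h : A.distP x y ≤ 0) : x = y :=
  funext fun i => A.tree.connected.dist_eq_zero_iff.mp (Nat.le_zero.mp (A.distP_le_iff.1 h i))

lemma distP_le_one_of_leP {x y : Fin n → V} (h : A.leP x y) : A.distP x y ≤ 1 :=
  A.distP_le_iff.2 fun i => A.dist_le_one_of_le (h i)

lemma leP_trans {x y z : Fin n → V} (hxy : A.leP x y) (hyz : A.leP y z) : A.leP x z :=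
  fun i => A.le_trans (hxy i) (hyz i)

lemma dual_leP {x y : Fin n → V} : A.dual.leP x y ↔ A.leP y x :=
  forall_congr' fun _ => A.dual_le

lemma dual_leP_or_leP {x y : Fin n → V} :
    (A.dual.leP x y ∨ A.dual.leP y x) ↔ (A.leP x y ∨ A.leP y x) := by
  rw [dual_leP, dual_leP, or_comm]

lemma isLConvex_dual {g : (Fin n → V) → WithTop ℝ} : A.dual.IsLConvex g ↔ A.IsLConvex g :=
  forall₂_congr fun x y => by rw [add_comm]; rfl

lemma leP_bullP_of_distP_le_one {x y : Fin n → V} (h : A.distP x y ≤ 1) :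
    A.leP x (A.bullP x y) :=
  fun i => A.le_bull_of_dist_le_one ((A.dist_le_distP x y i).trans h)

lemma circP_leP_of_distP_le_one {x y : Fin n → V} (h : A.distP x y ≤ 1) :
    A.leP (A.circP x y) x :=
  fun i => A.circ_le_of_dist_le_one ((A.dist_le_distP x y i).trans h)

lemma distP_circP_lt {x y : Fin n → V} (h : 2 ≤ A.distP x y) :
    A.distP x (A.circP x y) < A.distP x y := by
  have : A.distP x (A.circP x y) ≤ A.distP x y - 1 := A.distP_le_iff.2 fun i => by
    have := A.two_mul_dist_circ_le (x i) (y i)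
    have := A.dist_le_distP x y i
    simp only [circP]
    omega
  omega

lemma distP_circP_le {x p y : Fin n → V} {c : ℕ} (hp : A.distP x p ≤ c) (hy : A.distP x y ≤ c) :
    A.distP x (A.circP p y) ≤ c :=
  A.distP_le_iff.2 fun i => A.tree.dist_le_of_dist_add_dist_eq (A.dist_circ_add_dist_circ _ _)
    (A.distP_le_iff.1 hp i) (A.distP_le_iff.1 hy i)

lemma distP_bullP_le {x p y : Fin n → V} {k : ℕ} (hk : 0 < k) (hp : A.distP x p ≤ k)
    (hy : A.distP x y ≤ k + 1) (hfront : ∀ i, p i ≠ x i → A.T.dist (x i) (p i) = k → p i ∈ A.B) :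
    A.distP x (A.bullP p y) ≤ k :=
  A.distP_le_iff.2 fun i =>
    A.dist_bull_le hk (A.distP_le_iff.1 hp i) (A.distP_le_iff.1 hy i) (hfront i)

end AltTree

namespace AltTree

variable {V : Type*} {A : AltTree V} {n : ℕ} {g : (Fin n → V) → WithTop ℝ}

lemma IsLConvex.circP_le (hg : A.IsLConvex g) {p y : Fin n → V} (hp : g p ≠ ⊤)
    (hbull : g p ≤ g (A.bullP p y)) : g (A.circP p y) ≤ g y :=
  WithTop.le_of_add_le_add_left hp ((add_le_add hbull le_rfl).trans (hg p y))

lemma IsLConvex.le_of_distP_le_add_one (hg : A.IsLConvex g) {x p q : Fin n → V} {k : ℕ}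
    (hp : g p ≠ ⊤) (hup : ∀ z, A.leP p z → g p ≤ g z) (hdown : ∀ z, A.leP z p → g q ≤ g z)
    (hxp : A.distP x p ≤ k)
    (hfront : ∀ i, p i ≠ x i → A.T.dist (x i) (p i) = k → p i ∈ A.B)
    (hball : ∀ y, A.distP x y ≤ k → g p ≤ g y) (y : Fin n → V) (hy : A.distP x y ≤ k + 1) :
    g q ≤ g y := by
  induction hm : A.distP p y using Nat.strong_induction_on generalizing y with
  | _ m ih =>
  subst hm
  by_cases hpy : A.distP p y ≤ 1
  · exact (hdown _ (A.circP_leP_of_distP_le_one hpy)).trans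
      (hg.circP_le hp (hup _ (A.leP_bullP_of_distP_le_one hpy)))
  have hk : 0 < k := by
    have := A.distP_triangle p x y
    have := A.distP_comm x p
    omega
  have hbull := hball _ (A.distP_bullP_le hk hxp hy hfront)
  exact (ih _ (A.distP_circP_lt (by omega)) _ (A.distP_circP_le (by omega) hy) rfl).trans
    (hg.circP_le hp hbull)

/-- The state after `k` steps of steepest descent from `x`; after an odd number of steps it holds
for `A.dual` rather than `A`. -/
structure DescentInvariant (A : AltTree V) (g : (Fin n → V) → WithTop ℝ) (x : Fin n → V) (k : ℕ)
    (p : Fin n → V) : Prop where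
  ne_top : g p ≠ ⊤
  le_of_leP : ∀ z, A.leP p z → g p ≤ g z
  distP_le : A.distP x p ≤ k
  mem_B : ∀ i, p i ≠ x i → A.T.dist (x i) (p i) = k → p i ∈ A.B
  le_of_distP_le : ∀ y, A.distP x y ≤ k → g p ≤ g y

lemma DescentInvariant.zero {x : Fin n → V} (hx : g x ≠ ⊤) (hloc : ∀ z, A.leP x z → g x ≤ g z) :
    A.DescentInvariant g x 0 x where
  ne_top := hx
  le_of_leP := hloc
  distP_le := by simp [distP]
  mem_B _ h := absurd rfl h
  le_of_distP_le y hy := by rw [← A.eq_of_distP_le_zero hy]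

lemma DescentInvariant.succ {x p q : Fin n → V} {k : ℕ} (hs : A.DescentInvariant g x k p)
    (hg : A.IsLConvex g) (hq : A.leP q p ∨ A.leP p q)
    (hmin : ∀ z, A.leP z p ∨ A.leP p z → g q ≤ g z) (hlt : g q < g p) :
    A.dual.DescentInvariant g x (k + 1) q := by
  have hqp : A.leP q p := hq.resolve_right fun h => (hs.le_of_leP q h).not_gt hlt
  have hdown : ∀ z, A.leP z p → g q ≤ g z := fun z hz => hmin z (Or.inl hz)
  refine ⟨ne_top_of_lt hlt, fun z hz => hdown z (A.leP_trans (A.dual_leP.1 hz) hqp), ?_, ?_,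
    hg.le_of_distP_le_add_one hs.ne_top hs.le_of_leP hdown hs.distP_le hs.mem_B
      hs.le_of_distP_le⟩
  · show A.distP x q ≤ k + 1
    have := A.distP_triangle x p q
    have := A.distP_le_one_of_leP hqp
    have := A.distP_comm p q
    have := hs.distP_le
    omega
  · intro i _ (hqi : A.T.dist (x i) (q i) = k + 1)
    have hpi := A.dist_le_distP x p i
    have hs' := hs.distP_le
    rcases hqp i with h | ⟨-, hW, -⟩
    · rw [h] at hqi
      omega
    · exact hW

lemma DescentInvariant.distP_eq {x p z : Fin n → V} {k : ℕ} (hs : A.DescentInvariant g x k p)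
    (hz : A.leP z p ∨ A.leP p z) (hlt : g z < g p) : A.distP x z = k + 1 := by
  have hpz : A.distP p z ≤ 1 := by
    rcases hz with h | h
    · exact A.distP_comm p z ▸ A.distP_le_one_of_leP h
    · exact A.distP_le_one_of_leP h
  have := A.distP_triangle x p z
  have := hs.distP_le
  have : ¬ A.distP x z ≤ k := fun h => (hs.le_of_distP_le z h).not_gt hlt
  omega

end AltTree

/-- Lemma 2.19.  Let `g` be alternating L-convex on `T^n`, let
`x ∈ dom g` satisfy `g(x) = min_{y ∈ F(x)} g(y)`, and let `x = x^0, x^1, x^2, …` be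
(an initial segment of length `K` of) a run of the steepest descent algorithm applied
to `(g, x)`: each `x^{i+1}` is a minimizer of `g` over `I(x^i) ∪ F(x^i)` and
`g(x^{i+1}) < g(x^i)`.  Then for every `k` with `1 ≤ k ≤ K` and every
`z ∈ I(x^k) ∪ F(x^k)` with `g(z) < g(x^k)`, it holds `d(x, z) = k + 1`. -/
theorem stmt14 {V : Type*} (A : AltTree V) {n : ℕ}
    (g : (Fin n → V) → WithTop ℝ) (hg : A.IsLConvex g)
    (x : Fin n → V) (hdom : g x ≠ ⊤)
    (hloc : ∀ z : Fin n → V, A.leP x z → g x ≤ g z)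
    (seq : ℕ → Fin n → V) (h0 : seq 0 = x) (K : ℕ)
    (hstep : ∀ i < K, (A.leP (seq (i + 1)) (seq i) ∨ A.leP (seq i) (seq (i + 1))) ∧
      (∀ z : Fin n → V, (A.leP z (seq i) ∨ A.leP (seq i) z) → g (seq (i + 1)) ≤ g z) ∧
      g (seq (i + 1)) < g (seq i)) :
    ∀ k, 1 ≤ k → k ≤ K →
      ∀ z : Fin n → V, (A.leP z (seq k) ∨ A.leP (seq k) z) → g z < g (seq k) →
        A.distP x z = k + 1 := by
  have hinv : ∀ k ≤ K, A.DescentInvariant g x k (seq k) ∨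
      A.dual.DescentInvariant g x k (seq k) := by
    intro k hk
    induction k with
    | zero =>
      rw [h0]
      exact Or.inl (.zero hdom hloc)
    | succ k ih =>
      obtain ⟨hcomp, hmin, hlt⟩ := hstep k hk
      rcases ih (by omega) with hs | hs
      · exact Or.inr (hs.succ hg hcomp hmin hlt)
      · exact Or.inl (hs.succ (A.isLConvex_dual.2 hg) (A.dual_leP_or_leP.2 hcomp)
          (fun z hz => hmin z (A.dual_leP_or_leP.1 hz)) hlt)
  intro k _ hkK z hz hlt
  rcases hinv k hkK with hs | hs
  · exact hs.distP_eq hz hlt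
  · exact hs.distP_eq (A.dual_leP_or_leP.2 hz) hlt
end

section
/- (1) For any minimum-cost feasible multiflow f in N, the function x : E → ℝ defined by x(e) := f(e) is an optimal solution of the linear program (L). (2) For any optimal solution x of (L), there exists a feasible multiflow f in N with f(e) ≤ x(e) for all e ∈ E, and any such multiflow is a minimum-cost feasible multiflow. In particular, the minimum cost of a feasible multiflow equals the optimal value of (L). -/
/-!
The flow of a feasible multiflow solves (L), since each of its paths with an end at `s` leaves
every `X ∈ 𝒞_s`. Conversely, every solution `x` of (L) supports a feasible multiflow `f ≤ x`;
both parts then follow by comparing costs, as `a ≥ 0` and the cost of `f` is the (L)-objective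
of `e ↦ f(e)`.

If no such multiflow exists, Farkas' lemma gives edge lengths `y ≥ 0` and terminal values
`z ≥ 0` with `z s + z t ≤ y(P)` for every `S`-path `P` from `s` to `t`, but
`∑ r s * z s > ∑ x e * y e`. Let `φ_s` be the `y`-distance from `s` truncated at `z s`. For
`0 < θ ≤ z s` the sublevel set `{φ_s < θ}` lies in `𝒞_s`, so the coarea formula
`∑ x(e) |dφ_s(e)| = ∫ x(δ{φ_s < θ}) dθ` gives `r s * z s ≤ ∑ x(e) |dφ_s(e)|`. The dual
constraints make the balls `{φ_s < z s}` pairwise disjoint, whence `∑_s |dφ_s(e)| ≤ y(e)` on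
every edge; summing over `s` contradicts the choice of `y, z`.
-/

open SimpleGraph Finset

/-- A multiflow in the network `(V, G, S, c)`: a finite family of `S`-paths
(paths connecting two distinct terminals of `S`) with nonnegative flow values,
obeying the edge capacities `c`. -/
structure Multiflow {V : Type*} [DecidableEq V] (G : SimpleGraph V) (S : Finset V)
    (c : Sym2 V → ℝ) where
  N : ℕ
  src : Fin N → V
  dst : Fin N → V
  walk : (p : Fin N) → G.Walk (src p) (dst p)
  isPath : ∀ p, (walk p).IsPath
  srcS : ∀ p, src p ∈ S
  dstS : ∀ p, dst p ∈ S
  srcdst : ∀ p, src p ≠ dst p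
  lam : Fin N → ℝ
  lam_nonneg : ∀ p, 0 ≤ lam p
  cap : ∀ e ∈ G.edgeSet, (∑ p, if e ∈ (walk p).edges then lam p else 0) ≤ c e

namespace Multiflow

variable {V : Type*} [DecidableEq V] {G : SimpleGraph V} {S : Finset V} {c : Sym2 V → ℝ}

/-- The total flow `f(e)` through an edge `e`. -/
def flowOn (M : Multiflow G S c) (e : Sym2 V) : ℝ :=
  ∑ p, if e ∈ (M.walk p).edges then M.lam p else 0

/-- The total flow value `f(s)` of the paths having `s` as an endpoint. -/
def termVal (M : Multiflow G S c) (s : V) : ℝ :=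
  ∑ p, if M.src p = s ∨ M.dst p = s then M.lam p else 0

/-- Feasibility of a multiflow with respect to the demands `r`: `f(s) ≥ r(s)`. -/
def Feasible (M : Multiflow G S c) (r : V → ℝ) : Prop :=
  ∀ s ∈ S, r s ≤ M.termVal s

/-- The total cost `a_f = Σ_e a(e) f(e)` of a multiflow. -/
noncomputable def cost [Fintype V] [DecidableRel G.Adj]
    (M : Multiflow G S c) (a : Sym2 V → ℝ) : ℝ :=
  ∑ e ∈ G.edgeFinset, a e * M.flowOn e

end Multiflow

open Classical in
/-- The capacity `c(δX)` of the cut `δX`. -/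
noncomputable def cutCap {V : Type*} [Fintype V] [DecidableEq V]
    (G : SimpleGraph V) [DecidableRel G.Adj] (c : Sym2 V → ℝ) (X : Finset V) : ℝ :=
  ∑ e ∈ G.edgeFinset,
    if Sym2.lift ⟨fun i j => ((i ∈ X ∧ j ∉ X) ∨ (j ∈ X ∧ i ∉ X) : Prop),
        fun i j => propext (by tauto)⟩ e then c e else 0

/-- Feasibility for the cut-covering linear program (L):
`0 ≤ x(e) ≤ c(e)` for all edges and `x(δX) ≥ r(s)` for all `s ∈ S`, `X ∈ 𝒞_s`. -/
def LPFeasible {V : Type*} [Fintype V] [DecidableEq V]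
    (G : SimpleGraph V) [DecidableRel G.Adj] (S : Finset V)
    (c : Sym2 V → ℝ) (r : V → ℝ) (x : Sym2 V → ℝ) : Prop :=
  (∀ e ∈ G.edgeSet, 0 ≤ x e ∧ x e ≤ c e) ∧
  ∀ s ∈ S, ∀ X : Finset V, s ∈ X → (∀ t ∈ S, t ∈ X → t = s) → r s ≤ cutCap G x X

/-- The objective `Σ_{e ∈ E} a(e)·x(e)` of the linear program (L). -/
noncomputable def LPCost {V : Type*} [Fintype V] [DecidableEq V]
    (G : SimpleGraph V) [DecidableRel G.Adj] (a : Sym2 V → ℝ) (x : Sym2 V → ℝ) : ℝ :=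
  ∑ e ∈ G.edgeFinset, a e * x e

open Matrix

section Farkas

variable {m : Type*} [Fintype m]

lemma dotProduct_sub_div_smul (w v y y' : m → ℝ) :
    w ⬝ᵥ (y' - ((v ⬝ᵥ y') / (v ⬝ᵥ y)) • y) = (w - ((w ⬝ᵥ y) / (v ⬝ᵥ y)) • v) ⬝ᵥ y' := by
  simp only [dotProduct_sub, sub_dotProduct, dotProduct_smul, smul_dotProduct, smul_eq_mul,
    dotProduct_comm w y, dotProduct_comm v y']
  ring

/-- Farkas' lemma, by induction on the number of vectors: if `v 0` has negative product with
the separating vector `y` of the others, project everything along `v 0` onto `y⊥` and recurse. -/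
theorem exists_nonneg_sum_smul_eq_or_exists_dotProduct_neg :
    ∀ {n : ℕ} (v : Fin n → m → ℝ) (b : m → ℝ),
      (∃ μ : Fin n → ℝ, 0 ≤ μ ∧ ∑ i, μ i • v i = b) ∨
        ∃ y : m → ℝ, (∀ i, 0 ≤ v i ⬝ᵥ y) ∧ b ⬝ᵥ y < 0
  | 0, v, b => by
    by_cases hb : b = 0
    · exact Or.inl ⟨0, le_rfl, by simp [hb]⟩
    · refine Or.inr ⟨-b, finZeroElim, ?_⟩
      simpa using dotProduct_self_star_pos_iff.2 hb
  | n + 1, v, b => by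
    rcases exists_nonneg_sum_smul_eq_or_exists_dotProduct_neg (fun i => v i.succ) b with
      ⟨μ, hμ, hb⟩ | ⟨y, hy, hby⟩
    · refine Or.inl ⟨Fin.cons 0 μ, fun i => Fin.cases le_rfl (fun j => hμ j) i, ?_⟩
      simpa [Fin.sum_univ_succ] using hb
    by_cases h0 : 0 ≤ v 0 ⬝ᵥ y
    · exact Or.inr ⟨y, fun i => Fin.cases h0 hy i, hby⟩
    push Not at h0
    set d := v 0 ⬝ᵥ y
    let proj : (m → ℝ) → m → ℝ := fun w => w - ((w ⬝ᵥ y) / d) • v 0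
    rcases exists_nonneg_sum_smul_eq_or_exists_dotProduct_neg (fun i => proj (v i.succ))
      (proj b) with ⟨μ, hμ, hb'⟩ | ⟨y', hy', hby'⟩
    · set μ₀ := (b ⬝ᵥ y) / d - ∑ i, μ i * ((v i.succ ⬝ᵥ y) / d)
      have hμ₀ : 0 ≤ μ₀ := by
        have h1 : 0 ≤ (b ⬝ᵥ y) / d := div_nonneg_of_nonpos hby.le h0.le
        have h2 : ∑ i, μ i * ((v i.succ ⬝ᵥ y) / d) ≤ 0 :=
          Finset.sum_nonpos fun i _ => mul_nonpos_of_nonneg_of_nonpos (hμ i)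
            (div_nonpos_of_nonneg_of_nonpos (hy i) h0.le)
        linarith
      refine Or.inl ⟨Fin.cons μ₀ μ, fun i => Fin.cases hμ₀ (fun j => hμ j) i, ?_⟩
      simp only [proj, smul_sub, Finset.sum_sub_distrib, smul_smul, ← Finset.sum_smul] at hb'
      rw [Fin.sum_univ_succ, Fin.cons_zero]
      simp only [Fin.cons_succ]
      linear_combination (norm := module) hb'
    · have hv₀ : v 0 ⬝ᵥ (y' - ((v 0 ⬝ᵥ y') / d) • y) = 0 := by
        rw [dotProduct_sub_div_smul, div_self h0.ne, one_smul, sub_self, zero_dotProduct]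
      refine Or.inr ⟨y' - ((v 0 ⬝ᵥ y') / d) • y,
        fun i => Fin.cases hv₀.ge (fun j => ?_) i, by rw [dotProduct_sub_div_smul]; exact hby'⟩
      rw [dotProduct_sub_div_smul]
      exact hy' j

end Farkas

namespace Matrix

variable {m n : Type*} [Fintype m] [Fintype n]

theorem exists_nonneg_mulVec_eq_or_exists_vecMul_nonneg (B : Matrix m n ℝ) (b : m → ℝ) :
    (∃ μ : n → ℝ, 0 ≤ μ ∧ B *ᵥ μ = b) ∨ ∃ y : m → ℝ, 0 ≤ y ᵥ* B ∧ y ⬝ᵥ b < 0 := by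
  let e := Fintype.equivFin n
  rcases exists_nonneg_sum_smul_eq_or_exists_dotProduct_neg (fun i => Bᵀ (e.symm i)) b with
    ⟨μ, hμ, hb⟩ | ⟨y, hy, hby⟩
  · refine Or.inl ⟨μ ∘ e, fun j => hμ (e j), ?_⟩
    rw [← hb, mulVec_eq_sum, ← e.sum_comp]
    simp [op_smul_eq_smul]
  · refine Or.inr ⟨y, fun j => ?_, by rwa [dotProduct_comm]⟩
    have := hy (e j)
    rwa [Equiv.symm_apply_apply, dotProduct_comm] at this

theorem exists_nonneg_mulVec_le_or_exists_vecMul_nonneg [DecidableEq m]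
    (A : Matrix m n ℝ) (b : m → ℝ) :
    (∃ x : n → ℝ, 0 ≤ x ∧ A *ᵥ x ≤ b) ∨ ∃ y : m → ℝ, 0 ≤ y ∧ 0 ≤ y ᵥ* A ∧ y ⬝ᵥ b < 0 := by
  rcases exists_nonneg_mulVec_eq_or_exists_vecMul_nonneg (A.fromCols (1 : Matrix m m ℝ)) b with
    ⟨μ, hμ, hb⟩ | ⟨y, hy, hby⟩
  · refine Or.inl ⟨μ ∘ Sum.inl, fun j => hμ _, ?_⟩
    rw [fromCols_mulVec, one_mulVec] at hb
    rw [← hb]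
    exact le_add_of_nonneg_right fun i => hμ _
  · rw [vecMul_fromCols, vecMul_one] at hy
    exact Or.inr ⟨y, fun i => hy (Sum.inr i), fun j => hy (Sum.inl j), hby⟩

end Matrix

namespace SimpleGraph.Walk

variable {V : Type*} {G : SimpleGraph V} {u v w : V} {y : Sym2 V → ℝ}

def weight (y : Sym2 V → ℝ) (p : G.Walk u v) : ℝ := (p.edges.map y).sum

@[simp] lemma weight_nil : (nil : G.Walk u u).weight y = 0 := rfl

@[simp] lemma weight_cons (h : G.Adj u v) (p : G.Walk v w) :
    (cons h p).weight y = y s(u, v) + p.weight y := by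
  simp [weight]

@[simp] lemma weight_append (p : G.Walk u v) (q : G.Walk v w) :
    (p.append q).weight y = p.weight y + q.weight y := by
  simp [weight]

@[simp] lemma weight_reverse (p : G.Walk u v) : p.reverse.weight y = p.weight y := by
  simp [weight, List.sum_reverse]

lemma weight_bypass_le [DecidableEq V] (hy : ∀ e, 0 ≤ y e) (p : G.Walk u v) :
    p.bypass.weight y ≤ p.weight y :=
  (p.edges_bypass_sublist_edges.map y).sum_le_sum (by simpa using fun e _ => hy e)

lemma IsPath.sum_ite_mem_edges [DecidableEq V] [Fintype V] {p : G.Walk u v} (hp : p.IsPath) :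
    ∑ e : Sym2 V, (if e ∈ p.edges then y e else 0) = p.weight y := by
  rw [weight, ← List.sum_toFinset _ hp.edges_nodup, ← sum_filter]
  congr 1
  ext
  simp

end SimpleGraph.Walk

namespace Finset

variable {ι M : Type*} {S : Finset ι}

lemma sum_eq_zero_or_exists_sum_eq [AddCommMonoid M] {f : ι → M}
    (hf : ∀ i ∈ S, ∀ j ∈ S, f i ≠ 0 → f j ≠ 0 → i = j) :
    ∑ i ∈ S, f i = 0 ∨ ∃ i ∈ S, ∑ j ∈ S, f j = f i := by
  by_cases h : ∃ i ∈ S, f i ≠ 0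
  · obtain ⟨i, hi, hfi⟩ := h
    refine Or.inr ⟨i, hi, sum_eq_single_of_mem i hi fun j hj hji => ?_⟩
    by_contra hfj
    exact hji (hf j hj i hi hfj hfi)
  · push Not at h
    exact Or.inl (sum_eq_zero h)

lemma sum_add_sum_le_of_forall_add_le [AddCommMonoid M] [PartialOrder M] [IsOrderedAddMonoid M]
    {f g : ι → M} {c : M} (hf₀ : ∀ i ∈ S, 0 ≤ f i) (hg₀ : ∀ i ∈ S, 0 ≤ g i)
    (hf : ∀ i ∈ S, ∀ j ∈ S, f i ≠ 0 → f j ≠ 0 → i = j)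
    (hg : ∀ i ∈ S, ∀ j ∈ S, g i ≠ 0 → g j ≠ 0 → i = j)
    (hfg : ∀ i ∈ S, ∀ j ∈ S, f i + g j ≤ c) (hc : 0 ≤ c) :
    ∑ i ∈ S, f i + ∑ i ∈ S, g i ≤ c := by
  rcases sum_eq_zero_or_exists_sum_eq hf with hF | ⟨i, hi, hF⟩ <;>
    rcases sum_eq_zero_or_exists_sum_eq hg with hG | ⟨j, hj, hG⟩ <;> rw [hF, hG]
  · simpa using hc
  · exact (add_le_add_left (hf₀ j hj) _).trans (hfg j hj j hj)
  · exact (add_le_add_right (hg₀ i hi) _).trans (hfg i hi i hi)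
  · exact hfg i hi j hj

end Finset

section Coarea

open MeasureTheory Set

variable {V : Type*}

def edgeInterval (φ : V → ℝ) : Sym2 V → Set ℝ :=
  Sym2.lift ⟨fun u v => uIoc (φ u) (φ v), fun _ _ => uIoc_comm _ _⟩

def edgeVariation (φ : V → ℝ) : Sym2 V → ℝ :=
  Sym2.lift ⟨fun u v => |φ u - φ v|, fun _ _ => abs_sub_comm _ _⟩

@[simp] lemma edgeInterval_mk (φ : V → ℝ) (u v : V) :
    edgeInterval φ s(u, v) = uIoc (φ u) (φ v) := rfl

@[simp] lemma edgeVariation_mk (φ : V → ℝ) (u v : V) :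
    edgeVariation φ s(u, v) = |φ u - φ v| := rfl

lemma measurableSet_edgeInterval (φ : V → ℝ) (e : Sym2 V) : MeasurableSet (edgeInterval φ e) := by
  induction e using Sym2.ind with
  | _ u v => exact measurableSet_uIoc

lemma volume_real_edgeInterval (φ : V → ℝ) (e : Sym2 V) :
    volume.real (edgeInterval φ e) = edgeVariation φ e := by
  induction e using Sym2.ind with
  | _ u v => simp [uIoc, Real.volume_real_Ioc, max_sub_min_eq_abs']

lemma integrable_indicator_edgeInterval (φ : V → ℝ) (e : Sym2 V) (a : ℝ) :
    Integrable ((edgeInterval φ e).indicator fun _ => a) := by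
  refine (integrableOn_const ?_).integrable_indicator (measurableSet_edgeInterval φ e)
  induction e using Sym2.ind with
  | _ u v => simp [uIoc]

variable [Fintype V] [DecidableEq V] (G : SimpleGraph V) [DecidableRel G.Adj]

lemma cutCap_nonneg {x : Sym2 V → ℝ} (hx : ∀ e ∈ G.edgeSet, 0 ≤ x e) (X : Finset V) :
    0 ≤ cutCap G x X :=
  sum_nonneg fun e he => by
    split_ifs
    exacts [hx e (mem_edgeFinset.1 he), le_rfl]

lemma cutCap_filter_lt (x : Sym2 V → ℝ) (φ : V → ℝ) (θ : ℝ) :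
    cutCap G x (univ.filter fun v => φ v < θ) =
      ∑ e ∈ G.edgeFinset, (edgeInterval φ e).indicator (fun _ => x e) θ := by
  refine sum_congr rfl fun e _ => ?_
  induction e using Sym2.ind with
  | _ u v =>
    simp only [Sym2.lift_mk, Finset.mem_filter, Finset.mem_univ, true_and, not_lt,
      edgeInterval_mk, indicator, mem_uIoc]

lemma integrable_cutCap_filter_lt (x : Sym2 V → ℝ) (φ : V → ℝ) :
    Integrable fun θ => cutCap G x (univ.filter fun v => φ v < θ) := by
  simp_rw [cutCap_filter_lt]
  exact integrable_finsetSum _ fun e _ => integrable_indicator_edgeInterval φ e (x e)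

/-- The coarea formula for the sublevel cuts of `φ`. -/
theorem integral_cutCap_filter_lt (x : Sym2 V → ℝ) (φ : V → ℝ) :
    ∫ θ, cutCap G x (univ.filter fun v => φ v < θ) =
      ∑ e ∈ G.edgeFinset, x e * edgeVariation φ e := by
  simp_rw [cutCap_filter_lt]
  rw [integral_finsetSum _ fun e _ => integrable_indicator_edgeInterval φ e (x e)]
  refine sum_congr rfl fun e _ => ?_
  rw [integral_indicator_const _ (measurableSet_edgeInterval φ e), volume_real_edgeInterval,
    smul_eq_mul, mul_comm]

theorem mul_le_sum_mul_edgeVariation {x : Sym2 V → ℝ} (hx : ∀ e ∈ G.edgeSet, 0 ≤ x e)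
    {φ : V → ℝ} {r Z : ℝ} (hZ : 0 ≤ Z)
    (hr : ∀ θ, 0 < θ → θ ≤ Z → r ≤ cutCap G x (univ.filter fun v => φ v < θ)) :
    r * Z ≤ ∑ e ∈ G.edgeFinset, x e * edgeVariation φ e := by
  rw [← integral_cutCap_filter_lt]
  calc r * Z = ∫ θ, (Ioc 0 Z).indicator (fun _ => r) θ := by
        rw [integral_indicator_const _ measurableSet_Ioc, Real.volume_real_Ioc_of_le hZ,
          smul_eq_mul, sub_zero, mul_comm]
    _ ≤ _ := by
      refine integral_mono ((integrableOn_const (by simp)).integrable_indicator measurableSet_Ioc)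
        (integrable_cutCap_filter_lt G x φ) fun θ => ?_
      by_cases hθ : θ ∈ Ioc 0 Z
      · rw [indicator_of_mem hθ]
        exact hr θ hθ.1 hθ.2
      · rw [indicator_of_notMem hθ]
        exact cutCap_nonneg G hx _

end Coarea

section TruncDist

variable {V : Type*} [Fintype V] [DecidableEq V] (G : SimpleGraph V) [DecidableRel G.Adj]

noncomputable def truncDist (y : Sym2 V → ℝ) (Z : ℝ) (s v : V) : ℝ :=
  (insert Z ((univ : Finset (G.Path s v)).image fun p => p.1.weight y)).min'
    (insert_nonempty _ _)

variable {G} {y : Sym2 V → ℝ} {Z : ℝ} {s u v : V}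

lemma truncDist_le_bound : truncDist G y Z s v ≤ Z :=
  min'_le _ _ (mem_insert_self _ _)

lemma truncDist_le_weight (hy : ∀ e, 0 ≤ y e) (p : G.Walk s v) : truncDist G y Z s v ≤ p.weight y :=
  (min'_le _ _ (mem_insert_of_mem (mem_image_of_mem _ (mem_univ ⟨_, p.bypass_isPath⟩)))).trans
    (p.weight_bypass_le hy)

lemma le_truncDist {a : ℝ} (ha : a ≤ Z) (hp : ∀ p : G.Path s v, a ≤ p.1.weight y) :
    a ≤ truncDist G y Z s v := by
  refine le_min' _ _ _ fun b hb => ?_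
  rcases mem_insert.1 hb with rfl | hb
  · exact ha
  · obtain ⟨p, -, rfl⟩ := mem_image.1 hb
    exact hp p

lemma exists_weight_eq_truncDist (h : truncDist G y Z s v < Z) :
    ∃ p : G.Walk s v, p.weight y = truncDist G y Z s v := by
  rcases mem_insert.1 (min'_mem _ (insert_nonempty Z _)) with h' | h'
  · exact absurd h' h.ne
  · obtain ⟨p, -, hp⟩ := mem_image.1 h'
    exact ⟨p.1, hp⟩

lemma truncDist_le_add (hy : ∀ e, 0 ≤ y e) (huv : G.Adj u v) :
    truncDist G y Z s v ≤ truncDist G y Z s u + y s(u, v) := by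
  rcases (truncDist_le_bound (G := G) (y := y) (Z := Z) (s := s) (v := u)).lt_or_eq with h | h
  · obtain ⟨p, hp⟩ := exists_weight_eq_truncDist h
    simpa [hp] using truncDist_le_weight (Z := Z) hy (p.append (.cons huv .nil))
  · rw [h]
    linarith [truncDist_le_bound (G := G) (y := y) (Z := Z) (s := s) (v := v), hy s(u, v)]

lemma abs_truncDist_sub_le (hy : ∀ e, 0 ≤ y e) (huv : G.Adj u v) :
    |truncDist G y Z s u - truncDist G y Z s v| ≤ y s(u, v) := by
  have h₁ := truncDist_le_add (Z := Z) (s := s) hy huv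
  have h₂ := truncDist_le_add (Z := Z) (s := s) hy huv.symm
  rw [Sym2.eq_swap] at h₂
  exact abs_sub_le_iff.2 ⟨by linarith, by linarith⟩

lemma add_le_truncDist_add_weight_add {t : V} {Z' : ℝ}
    (hdual : ∀ p : G.Walk s t, Z + Z' ≤ p.weight y)
    (hu : truncDist G y Z s u < Z) (hv : truncDist G y Z' t v < Z') (q : G.Walk u v) :
    Z + Z' ≤ truncDist G y Z s u + q.weight y + truncDist G y Z' t v := by
  obtain ⟨p, hp⟩ := exists_weight_eq_truncDist hu
  obtain ⟨p', hp'⟩ := exists_weight_eq_truncDist hv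
  simpa [← hp, ← hp', add_assoc] using hdual (p.append (q.append p'.reverse))

variable {S : Finset V} {z : V → ℝ}

lemma eq_of_truncDist_lt (hdual : ∀ s ∈ S, ∀ t ∈ S, s ≠ t → ∀ p : G.Walk s t, z s + z t ≤ p.weight y) {t w : V} (hs : s ∈ S) (ht : t ∈ S)
    (hsw : truncDist G y (z s) s w < z s) (htw : truncDist G y (z t) t w < z t) : s = t := by
  by_contra hst
  have := add_le_truncDist_add_weight_add (hdual s hs t ht hst) hsw htw .nil
  simp only [Walk.weight_nil] at this
  linarith

lemma posPart_add_negPart_truncDist_sub_le (hy : ∀ e, 0 ≤ y e)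
    (hdual : ∀ s ∈ S, ∀ t ∈ S, s ≠ t → ∀ p : G.Walk s t, z s + z t ≤ p.weight y) {t : V} (hs : s ∈ S) (ht : t ∈ S) (huv : G.Adj u v) :
    (truncDist G y (z s) s u - truncDist G y (z s) s v)⁺ +
      (truncDist G y (z t) t u - truncDist G y (z t) t v)⁻ ≤ y s(u, v) := by
  have habs : ∀ s, |truncDist G y (z s) s u - truncDist G y (z s) s v| ≤ y s(u, v) :=
    fun s => abs_truncDist_sub_le hy huv
  rcases eq_or_ne s t with rfl | hst
  · rw [posPart_add_negPart]
    exact habs s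
  rcases le_or_gt (truncDist G y (z s) s u - truncDist G y (z s) s v) 0 with ha | ha
  · rw [posPart_eq_zero.2 ha, zero_add]
    exact (le_add_of_nonneg_left (posPart_nonneg _)).trans
      ((posPart_add_negPart _).trans_le (habs t))
  rcases le_or_gt 0 (truncDist G y (z t) t u - truncDist G y (z t) t v) with hb | hb
  · rw [negPart_eq_zero.2 hb, add_zero]
    exact (le_add_of_nonneg_right (negPart_nonneg _)).trans
      ((posPart_add_negPart _).trans_le (habs s))
  rw [posPart_of_nonneg ha.le, negPart_of_nonpos hb.le]
  have hu := (truncDist_le_bound (G := G) (y := y) (Z := z t) (s := t) (v := v))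
  have hv := (truncDist_le_bound (G := G) (y := y) (Z := z s) (s := s) (v := u))
  have hsep := add_le_truncDist_add_weight_add (hdual t ht s hs hst.symm)
    (by linarith) (by linarith) (.cons huv .nil)
  simp only [Walk.weight_cons, Walk.weight_nil, add_zero] at hsep
  linarith

/-- By `eq_of_truncDist_lt`, each end of the edge lies in at most one of the balls
`{w | truncDist G y (z s) s w < z s}`, so at most two terms of the sum are nonzero. -/
lemma sum_edgeVariation_truncDist_le (hy : ∀ e, 0 ≤ y e)
    (hdual : ∀ s ∈ S, ∀ t ∈ S, s ≠ t → ∀ p : G.Walk s t, z s + z t ≤ p.weight y) {e : Sym2 V} (he : e ∈ G.edgeSet) :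
    ∑ s ∈ S, edgeVariation (truncDist G y (z s) s) e ≤ y e := by
  induction e using Sym2.ind with
  | _ u v => ?_
  have huv : G.Adj u v := he
  have hpos : ∀ s, (truncDist G y (z s) s u - truncDist G y (z s) s v)⁺ ≠ 0 →
      truncDist G y (z s) s v < z s := fun s h => by
    have := posPart_pos_iff.1 ((posPart_nonneg _).lt_of_ne' h)
    linarith [truncDist_le_bound (G := G) (y := y) (Z := z s) (s := s) (v := u)]
  have hneg : ∀ s, (truncDist G y (z s) s u - truncDist G y (z s) s v)⁻ ≠ 0 →
      truncDist G y (z s) s u < z s := fun s h => by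
    have := negPart_pos_iff.1 ((negPart_nonneg _).lt_of_ne' h)
    linarith [truncDist_le_bound (G := G) (y := y) (Z := z s) (s := s) (v := v)]
  simp only [edgeVariation_mk]
  simp_rw [← posPart_add_negPart, sum_add_distrib]
  exact sum_add_sum_le_of_forall_add_le (fun _ _ => posPart_nonneg _)
    (fun _ _ => negPart_nonneg _)
    (fun s hs t ht h₁ h₂ => eq_of_truncDist_lt hdual hs ht (hpos s h₁) (hpos t h₂))
    (fun s hs t ht h₁ h₂ => eq_of_truncDist_lt hdual hs ht (hneg s h₁) (hneg t h₂))
    (fun s hs t ht => posPart_add_negPart_truncDist_sub_le hy hdual hs ht huv) (hy _)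

/-- Weak duality between (L) and the dual of the path-packing LP. -/
theorem sum_mul_le_sum_mul_of_add_le_weight {S : Finset V} {x y : Sym2 V → ℝ} {r z : V → ℝ}
    (hx : ∀ e ∈ G.edgeSet, 0 ≤ x e)
    (hcut : ∀ s ∈ S, ∀ X : Finset V, s ∈ X → (∀ t ∈ S, t ∈ X → t = s) → r s ≤ cutCap G x X)
    (hy : ∀ e, 0 ≤ y e) (hz : ∀ v, 0 ≤ z v)
    (hdual : ∀ s ∈ S, ∀ t ∈ S, s ≠ t → ∀ p : G.Path s t, z s + z t ≤ p.1.weight y) :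
    ∑ s ∈ S, r s * z s ≤ ∑ e ∈ G.edgeFinset, x e * y e := by
  have hdualWalk : ∀ s ∈ S, ∀ t ∈ S, s ≠ t → ∀ p : G.Walk s t, z s + z t ≤ p.weight y :=
    fun s hs t ht hst p =>
      (hdual s hs t ht hst ⟨p.bypass, p.bypass_isPath⟩).trans (p.weight_bypass_le hy)
  have hslice : ∀ s ∈ S,
      r s * z s ≤ ∑ e ∈ G.edgeFinset, x e * edgeVariation (truncDist G y (z s) s) e := by
    intro s hs
    refine mul_le_sum_mul_edgeVariation G hx (hz s) fun θ hθ _ =>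
      hcut s hs _ ?_ fun t ht htX => ?_
    · simpa using (truncDist_le_weight hy Walk.nil).trans_lt hθ
    · by_contra hts
      have : z s ≤ truncDist G y (z s) s t :=
        le_truncDist le_rfl fun p => by linarith [hdual s hs t ht (Ne.symm hts) p, hz t]
      simp only [mem_filter, mem_univ, true_and] at htX
      linarith
  calc ∑ s ∈ S, r s * z s
      ≤ ∑ s ∈ S, ∑ e ∈ G.edgeFinset, x e * edgeVariation (truncDist G y (z s) s) e :=
        sum_le_sum hslice
    _ = ∑ e ∈ G.edgeFinset, x e * ∑ s ∈ S, edgeVariation (truncDist G y (z s) s) e := by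
        rw [sum_comm]
        simp_rw [mul_sum]
    _ ≤ ∑ e ∈ G.edgeFinset, x e * y e :=
        sum_le_sum fun e he => mul_le_mul_of_nonneg_left
          (sum_edgeVariation_truncDist_le hy hdualWalk (mem_edgeFinset.1 he))
          (hx e (mem_edgeFinset.1 he))

end TruncDist

section Multiflows

variable {V : Type*} [DecidableEq V] {G : SimpleGraph V} {S : Finset V} {c : Sym2 V → ℝ}

/-- The predicate inside `cutCap`. -/
def crossesCut (X : Finset V) : Sym2 V → Prop :=
  Sym2.lift ⟨fun i j => ((i ∈ X ∧ j ∉ X) ∨ (j ∈ X ∧ i ∉ X) : Prop), fun _ _ => propext (by tauto)⟩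

lemma SimpleGraph.Walk.exists_crossesCut_mem_edges {X : Finset V} :
    ∀ {a b : V} (w : G.Walk a b), a ∈ X → b ∉ X → ∃ e ∈ w.edges, crossesCut X e
  | _, _, .nil, ha, hb => absurd ha hb
  | _, _, .cons (v := v) _ w, ha, hb => by
    by_cases hv : v ∈ X
    · obtain ⟨e, he, hc⟩ := w.exists_crossesCut_mem_edges hv hb
      exact ⟨e, List.mem_cons_of_mem _ he, hc⟩
    · exact ⟨_, List.mem_cons_self, Or.inl ⟨ha, hv⟩⟩

namespace Multiflow

lemma flowOn_nonneg (M : Multiflow G S c) (e : Sym2 V) : 0 ≤ M.flowOn e :=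
  sum_nonneg fun p _ => by
    split_ifs
    exacts [M.lam_nonneg p, le_rfl]

variable [Fintype V] [DecidableRel G.Adj]

open Classical in
lemma cutCap_flowOn (M : Multiflow G S c) (X : Finset V) :
    cutCap G M.flowOn X =
      ∑ p, ∑ e ∈ G.edgeFinset, if crossesCut X e ∧ e ∈ (M.walk p).edges then M.lam p else 0 := by
  rw [sum_comm]
  refine sum_congr rfl fun e _ => ?_
  simp only [flowOn, ite_and]
  rw [sum_ite_irrel, sum_const_zero]
  rfl

/-- Every path with an end at `s ∈ X` leaves `X`, since its other end is a different terminal. -/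
lemma termVal_le_cutCap (M : Multiflow G S c) {s : V} {X : Finset V} (hsX : s ∈ X)
    (hX : ∀ t ∈ S, t ∈ X → t = s) : M.termVal s ≤ cutCap G M.flowOn X := by
  classical
  rw [cutCap_flowOn]
  have hnonneg : ∀ p e, 0 ≤ if crossesCut X e ∧ e ∈ (M.walk p).edges then M.lam p else 0 :=
    fun p e => by
      split_ifs
      exacts [M.lam_nonneg p, le_rfl]
  refine sum_le_sum fun p _ => ?_
  split_ifs with hp
  · obtain ⟨e, he, hc⟩ : ∃ e ∈ (M.walk p).edges, crossesCut X e := by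
      rcases hp with hp | hp
      · exact (M.walk p).exists_crossesCut_mem_edges (hp ▸ hsX)
          fun h => M.srcdst p (hp.trans (hX _ (M.dstS p) h).symm)
      · obtain ⟨e, he, hc⟩ := (M.walk p).reverse.exists_crossesCut_mem_edges (hp ▸ hsX)
          fun h => M.srcdst p ((hX _ (M.srcS p) h).trans hp.symm)
        exact ⟨e, by simpa using he, hc⟩
    calc M.lam p = if crossesCut X e ∧ e ∈ (M.walk p).edges then M.lam p else 0 :=
          (if_pos ⟨hc, he⟩).symm
      _ ≤ _ := single_le_sum (fun e _ => hnonneg p e)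
          (mem_edgeFinset.2 ((M.walk p).edges_subset_edgeSet he))
  · exact sum_nonneg fun e _ => hnonneg p e

theorem lpFeasible_flowOn {r : V → ℝ} (M : Multiflow G S c) (hM : M.Feasible r) :
    LPFeasible G S c r M.flowOn :=
  ⟨fun e he => ⟨M.flowOn_nonneg e, M.cap e he⟩,
    fun s hs _ hsX hX => (hM s hs).trans (M.termVal_le_cutCap hsX hX)⟩

end Multiflow

end Multiflows

section PathPacking

variable {V : Type*} [DecidableEq V] {G : SimpleGraph V} {S : Finset V} {c : Sym2 V → ℝ}

variable (G S) in
abbrev SPath := {P : Σ u v : V, G.Path u v // P.1 ∈ S ∧ P.2.1 ∈ S ∧ P.1 ≠ P.2.1}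

variable (G S) in
noncomputable def pathPackingMatrix : Matrix (Sym2 V ⊕ V) (SPath G S) ℝ :=
  Matrix.of fun i P => Sum.elim (fun e => if e ∈ P.1.2.2.1.edges then 1 else 0)
    (fun v => -if P.1.1 = v ∨ P.1.2.1 = v then 1 else 0) i

lemma vecMul_pathPackingMatrix [Fintype V] (y : Sym2 V ⊕ V → ℝ) (P : SPath G S) :
    (y ᵥ* pathPackingMatrix G S) P =
      P.1.2.2.1.weight (y ∘ .inl) - (y (.inr P.1.1) + y (.inr P.1.2.1)) := by
  obtain ⟨⟨s, t, p⟩, -, -, hst⟩ := P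
  have hends : (∑ v, if s = v ∨ t = v then y (.inr v) else 0) = y (.inr s) + y (.inr t) := by
    rw [Fintype.sum_eq_add s t hst fun v hv => if_neg fun h => h.elim
      (fun h => hv.1 h.symm) (fun h => hv.2 h.symm)]
    simp
  rw [← p.2.sum_ite_mem_edges, ← hends]
  simp [pathPackingMatrix, vecMul, dotProduct, Fintype.sum_sum_type, sub_eq_add_neg]

variable [Fintype V] [DecidableRel G.Adj]

namespace Multiflow

noncomputable def ofSPathWeights (w : SPath G S → ℝ) (hw : 0 ≤ w)
    (hcap : ∀ e ∈ G.edgeSet, ∑ P, (if e ∈ P.1.2.2.1.edges then w P else 0) ≤ c e) :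
    Multiflow G S c where
  N := Fintype.card (SPath G S)
  src i := ((Fintype.equivFin _).symm i).1.1
  dst i := ((Fintype.equivFin _).symm i).1.2.1
  walk i := ((Fintype.equivFin _).symm i).1.2.2.1
  isPath i := ((Fintype.equivFin _).symm i).1.2.2.2
  srcS i := ((Fintype.equivFin _).symm i).2.1
  dstS i := ((Fintype.equivFin _).symm i).2.2.1
  srcdst i := ((Fintype.equivFin _).symm i).2.2.2
  lam i := w ((Fintype.equivFin _).symm i)
  lam_nonneg _ := hw _
  cap e he := by
    simpa only [(Fintype.equivFin _).symm.sum_comp fun P : SPath G S =>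
      if e ∈ P.1.2.2.1.edges then w P else 0] using hcap e he

variable {w : SPath G S → ℝ} {hw : 0 ≤ w}
  {hcap : ∀ e ∈ G.edgeSet, ∑ P, (if e ∈ P.1.2.2.1.edges then w P else 0) ≤ c e}

lemma flowOn_ofSPathWeights (e : Sym2 V) :
    (ofSPathWeights w hw hcap).flowOn e = ∑ P, if e ∈ P.1.2.2.1.edges then w P else 0 :=
  (Fintype.equivFin _).symm.sum_comp fun P : SPath G S => if e ∈ P.1.2.2.1.edges then w P else 0

lemma termVal_ofSPathWeights (s : V) :
    (ofSPathWeights w hw hcap).termVal s = ∑ P, if P.1.1 = s ∨ P.1.2.1 = s then w P else 0 :=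
  (Fintype.equivFin _).symm.sum_comp fun P : SPath G S =>
    if P.1.1 = s ∨ P.1.2.1 = s then w P else 0

end Multiflow

lemma pathPackingMatrix_mulVec_inl (w : SPath G S → ℝ) (e : Sym2 V) :
    (pathPackingMatrix G S *ᵥ w) (.inl e) = ∑ P, if e ∈ P.1.2.2.1.edges then w P else 0 := by
  simp [pathPackingMatrix, mulVec, dotProduct]

lemma pathPackingMatrix_mulVec_inr (w : SPath G S → ℝ) (v : V) :
    (pathPackingMatrix G S *ᵥ w) (.inr v) = -∑ P, if P.1.1 = v ∨ P.1.2.1 = v then w P else 0 := by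
  simp [pathPackingMatrix, mulVec, dotProduct]

/-- By Farkas' lemma applied to the path-packing LP, whose dual alternative is excluded by
`sum_mul_le_sum_mul_of_add_le_weight`. -/
theorem exists_feasible_multiflow_flowOn_le {r : V → ℝ} {x : Sym2 V → ℝ}
    (hx : LPFeasible G S c r x) :
    ∃ M : Multiflow G S c, M.Feasible r ∧ ∀ e ∈ G.edgeSet, M.flowOn e ≤ x e := by
  -- the rows of non-edges and non-terminals read `0 ≤ 0`
  let b : Sym2 V ⊕ V → ℝ :=
    Sum.elim (fun e => if e ∈ G.edgeSet then x e else 0) (fun v => if v ∈ S then -r v else 0)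
  rcases (pathPackingMatrix G S).exists_nonneg_mulVec_le_or_exists_vecMul_nonneg b with
    ⟨w, hw, hAw⟩ | ⟨y, hy, hyA, hyb⟩
  · have hflow : ∀ e ∈ G.edgeSet, ∑ P, (if e ∈ P.1.2.2.1.edges then w P else 0) ≤ x e :=
      fun e he => by simpa [b, he, pathPackingMatrix_mulVec_inl] using hAw (.inl e)
    refine ⟨.ofSPathWeights w hw fun e he => (hflow e he).trans (hx.1 e he).2,
      fun s hs => ?_, fun e he => ?_⟩
    · rw [Multiflow.termVal_ofSPathWeights]
      simpa [b, hs, pathPackingMatrix_mulVec_inr] using hAw (.inr s)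
    · rw [Multiflow.flowOn_ofSPathWeights]
      exact hflow e he
  · have hdual : ∀ s ∈ S, ∀ t ∈ S, s ≠ t → ∀ p : G.Path s t,
        y (.inr s) + y (.inr t) ≤ p.1.weight (y ∘ .inl) := fun s hs t ht hst p => by
      simpa [vecMul_pathPackingMatrix] using hyA ⟨⟨s, t, p⟩, hs, ht, hst⟩
    have hyb' : y ⬝ᵥ b = ∑ e ∈ G.edgeFinset, x e * y (.inl e) - ∑ s ∈ S, r s * y (.inr s) := by
      simp only [b, dotProduct, Fintype.sum_sum_type, Sum.elim_inl, Sum.elim_inr, mul_ite,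
        mul_zero, ← mem_edgeFinset, Fintype.sum_ite_mem, mul_neg, sum_neg_distrib]
      simp only [mul_comm, sub_eq_add_neg]
    have := sum_mul_le_sum_mul_of_add_le_weight (fun e he => (hx.1 e he).1) hx.2
      (fun e => hy (.inl e)) (fun v => hy (.inr v)) hdual
    linarith

end PathPacking

namespace Multiflow

variable {V : Type*} [Fintype V] [DecidableEq V] {G : SimpleGraph V} [DecidableRel G.Adj]
  {S : Finset V} {c : Sym2 V → ℝ}

lemma cost_le_lpCost {a : Sym2 V → ℝ} (ha : ∀ e, 0 ≤ a e) (M : Multiflow G S c)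
    {x : Sym2 V → ℝ} (hx : ∀ e ∈ G.edgeSet, M.flowOn e ≤ x e) : M.cost a ≤ LPCost G a x :=
  sum_le_sum fun e he => mul_le_mul_of_nonneg_left (hx e (mem_edgeFinset.1 he)) (ha e)

end Multiflow

theorem stmt18_general {V : Type*} [Fintype V] [DecidableEq V]
    (G : SimpleGraph V) [DecidableRel G.Adj] (S : Finset V)
    (c a : Sym2 V → ℕ) (r : V → ℕ) :
    (∀ M : Multiflow G S fun e => (c e : ℝ), M.Feasible (fun s => (r s : ℝ)) →
      (∀ M' : Multiflow G S fun e => (c e : ℝ), M'.Feasible (fun s => (r s : ℝ)) →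
        M.cost (fun e => (a e : ℝ)) ≤ M'.cost (fun e => (a e : ℝ))) →
      (LPFeasible G S (fun e => (c e : ℝ)) (fun s => (r s : ℝ)) M.flowOn ∧
        ∀ x : Sym2 V → ℝ, LPFeasible G S (fun e => (c e : ℝ)) (fun s => (r s : ℝ)) x →
          LPCost G (fun e => (a e : ℝ)) M.flowOn ≤ LPCost G (fun e => (a e : ℝ)) x)) ∧
    (∀ x : Sym2 V → ℝ, LPFeasible G S (fun e => (c e : ℝ)) (fun s => (r s : ℝ)) x →
      (∀ x' : Sym2 V → ℝ, LPFeasible G S (fun e => (c e : ℝ)) (fun s => (r s : ℝ)) x' →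
        LPCost G (fun e => (a e : ℝ)) x ≤ LPCost G (fun e => (a e : ℝ)) x') →
      ((∃ M : Multiflow G S fun e => (c e : ℝ), M.Feasible (fun s => (r s : ℝ)) ∧
          ∀ e ∈ G.edgeSet, M.flowOn e ≤ x e) ∧
        (∀ M : Multiflow G S fun e => (c e : ℝ), M.Feasible (fun s => (r s : ℝ)) →
          (∀ e ∈ G.edgeSet, M.flowOn e ≤ x e) →
          ∀ M' : Multiflow G S fun e => (c e : ℝ), M'.Feasible (fun s => (r s : ℝ)) →
            M.cost (fun e => (a e : ℝ)) ≤ M'.cost (fun e => (a e : ℝ))) ∧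
        (∀ M : Multiflow G S fun e => (c e : ℝ), M.Feasible (fun s => (r s : ℝ)) →
          (∀ M' : Multiflow G S fun e => (c e : ℝ), M'.Feasible (fun s => (r s : ℝ)) →
            M.cost (fun e => (a e : ℝ)) ≤ M'.cost (fun e => (a e : ℝ))) →
          M.cost (fun e => (a e : ℝ)) = LPCost G (fun e => (a e : ℝ)) x))) := by
  have ha : ∀ e, (0 : ℝ) ≤ a e := fun e => Nat.cast_nonneg _
  refine ⟨fun M hM hmin => ⟨M.lpFeasible_flowOn hM, fun x hx => ?_⟩, fun x hx hopt => ?_⟩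
  · obtain ⟨Mx, hMx, hle⟩ := exists_feasible_multiflow_flowOn_le hx
    exact (hmin Mx hMx).trans (Mx.cost_le_lpCost ha hle)
  · obtain ⟨Mx, hMx, hle⟩ := exists_feasible_multiflow_flowOn_le hx
    have hopt' : ∀ M : Multiflow G S fun e => (c e : ℝ), M.Feasible (fun s => (r s : ℝ)) →
        LPCost G (fun e => (a e : ℝ)) x ≤ M.cost (fun e => (a e : ℝ)) :=
      fun M hM => hopt _ (M.lpFeasible_flowOn hM)
    exact ⟨⟨Mx, hMx, hle⟩,
      fun M _ hle' M' hM' => (M.cost_le_lpCost ha hle').trans (hopt' M' hM'),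
      fun M hM hmin => le_antisymm ((hmin Mx hMx).trans (Mx.cost_le_lpCost ha hle)) (hopt' M hM)⟩

/-- Lemma 3.5, equivalence of (N) and (L).
(1) For any minimum-cost feasible multiflow `f`, the flow-support `x(e) := f(e)` is an
optimal solution of (L).  (2) For any optimal solution `x` of (L), there exists a
feasible multiflow `f` with `f(e) ≤ x(e)` for all edges, and any such multiflow is a
minimum-cost feasible multiflow.  In particular the minimum cost of a feasible
multiflow equals the optimal value of (L). -/
theorem stmt18 {V : Type*} [Fintype V] [DecidableEq V]
    (G : SimpleGraph V) [DecidableRel G.Adj] (S : Finset V)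
    (c a : Sym2 V → ℕ) (r : V → ℕ)
    (hfeas : ∀ s ∈ S, ∀ X : Finset V, s ∈ X → (∀ t ∈ S, t ∈ X → t = s) →
      (r s : ℝ) ≤ cutCap G (fun e => (c e : ℝ)) X) :
    (∀ M : Multiflow G S fun e => (c e : ℝ), M.Feasible (fun s => (r s : ℝ)) →
      (∀ M' : Multiflow G S fun e => (c e : ℝ), M'.Feasible (fun s => (r s : ℝ)) →
        M.cost (fun e => (a e : ℝ)) ≤ M'.cost (fun e => (a e : ℝ))) →
      (LPFeasible G S (fun e => (c e : ℝ)) (fun s => (r s : ℝ)) M.flowOn ∧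
        ∀ x : Sym2 V → ℝ, LPFeasible G S (fun e => (c e : ℝ)) (fun s => (r s : ℝ)) x →
          LPCost G (fun e => (a e : ℝ)) M.flowOn ≤ LPCost G (fun e => (a e : ℝ)) x)) ∧
    (∀ x : Sym2 V → ℝ, LPFeasible G S (fun e => (c e : ℝ)) (fun s => (r s : ℝ)) x →
      (∀ x' : Sym2 V → ℝ, LPFeasible G S (fun e => (c e : ℝ)) (fun s => (r s : ℝ)) x' →
        LPCost G (fun e => (a e : ℝ)) x ≤ LPCost G (fun e => (a e : ℝ)) x') →
      ((∃ M : Multiflow G S fun e => (c e : ℝ), M.Feasible (fun s => (r s : ℝ)) ∧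
          ∀ e ∈ G.edgeSet, M.flowOn e ≤ x e) ∧
        (∀ M : Multiflow G S fun e => (c e : ℝ), M.Feasible (fun s => (r s : ℝ)) →
          (∀ e ∈ G.edgeSet, M.flowOn e ≤ x e) →
          ∀ M' : Multiflow G S fun e => (c e : ℝ), M'.Feasible (fun s => (r s : ℝ)) →
            M.cost (fun e => (a e : ℝ)) ≤ M'.cost (fun e => (a e : ℝ))) ∧
        (∀ M : Multiflow G S fun e => (c e : ℝ), M.Feasible (fun s => (r s : ℝ)) →
          (∀ M' : Multiflow G S fun e => (c e : ℝ), M'.Feasible (fun s => (r s : ℝ)) →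
            M.cost (fun e => (a e : ℝ)) ≤ M'.cost (fun e => (a e : ℝ))) →
          M.cost (fun e => (a e : ℝ)) = LPCost G (fun e => (a e : ℝ)) x))) :=
  stmt18_general G S c a r
end
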